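/- arXiv:1201.0382 — 14 statements merged into one kernel-verified Lean document; each statement's English description precedes it below -/
import Mathlib

section
/- The Continuum Hypothesis holds if and only if there exist sets A, B ⊆ ℝ × ℝ such that A ∪ B = ℝ × ℝ, every vertical section A_x = {y ∈ ℝ : (x,y) ∈ A} is countable, and every horizontal section B^y = {x ∈ ℝ : (x,y) ∈ B} is countable. -/
open Cardinal Set

theorem sierpinski_aux :
    Cardinal.continuum.{0} = Cardinal.aleph.{0} 1 ↔
      ∃ A B : Set (ℝ × ℝ),
        A ∪ B = Set.univ ∧
        (∀ x : ℝ, {y : ℝ | (x, y) ∈ A}.Countable) ∧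
        (∀ y : ℝ, {x : ℝ | (x, y) ∈ B}.Countable) := by
  constructor
  · intro hCH
    have hR : #ℝ = Cardinal.aleph 1 := Cardinal.mk_real.trans hCH
    have hT : #((Cardinal.aleph.{0} 1).ord.ToType) = Cardinal.aleph 1 := by
      rw [Cardinal.mk_toType, Cardinal.card_ord]
    obtain ⟨e⟩ := Cardinal.eq.mp (hR.trans hT.symm)
    have hIic : ∀ i : (Cardinal.aleph.{0} 1).ord.ToType, (Set.Iic i).Countable := by
      intro i
      have h1 : (Set.Iio i).Countable := by
        rw [Cardinal.countable_iff_lt_aleph_one]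
        exact Cardinal.mk_Iio_ord_toType i
      have h2 : Set.Iic i = Set.Iio i ∪ {i} := by
        ext j; simp [le_iff_lt_or_eq]
      rw [h2]
      exact h1.union (Set.countable_singleton i)
    refine ⟨{p | e p.2 ≤ e p.1}, {p | e p.1 ≤ e p.2}, ?_, ?_, ?_⟩
    · ext p
      simpa using le_total (e p.2) (e p.1)
    · intro x
      have : {y : ℝ | (x, y) ∈ {p : ℝ × ℝ | e p.2 ≤ e p.1}} = e ⁻¹' (Set.Iic (e x)) := rfl
      rw [this]
      exact (hIic (e x)).preimage e.injective
    · intro y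
      have : {x : ℝ | (x, y) ∈ {p : ℝ × ℝ | e p.1 ≤ e p.2}} = e ⁻¹' (Set.Iic (e y)) := rfl
      rw [this]
      exact (hIic (e y)).preimage e.injective
  · rintro ⟨A, B, hAB, hA, hB⟩
    refine le_antisymm ?_ Cardinal.aleph_one_le_continuum
    by_contra h
    push_neg at h
    have h' : Cardinal.aleph 1 < #ℝ := by rwa [Cardinal.mk_real]
    obtain ⟨S, hS⟩ := Cardinal.le_mk_iff_exists_set.mp h'.le
    have hScard : ¬ S.Countable := by
      rw [Cardinal.countable_iff_lt_aleph_one, hS]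
      exact lt_irrefl _
    set T : Set ℝ := ⋃ x ∈ S, {y : ℝ | (x, y) ∈ A} with hT
    have hTcard : #T < #ℝ := by
      calc #T ≤ #S * Cardinal.aleph0 := by
              refine (Cardinal.mk_biUnion_le _ S).trans ?_
              gcongr
              exact ciSup_le' fun x => (hA x).le_aleph0
        _ = Cardinal.aleph 1 := by
              rw [hS, Cardinal.mul_eq_left (Cardinal.aleph0_le_aleph 1) (Cardinal.aleph0_le_aleph 1)
                  Cardinal.aleph0_ne_zero]
        _ < #ℝ := h'
    have hTne : T ≠ Set.univ := by
      intro hu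
      rw [hu] at hTcard
      simp at hTcard
    obtain ⟨y₀, hy₀⟩ : ∃ y₀, y₀ ∉ T := by
      by_contra hc
      push_neg at hc
      exact hTne (Set.eq_univ_of_forall hc)
    have hSB : S ⊆ {x : ℝ | (x, y₀) ∈ B} := by
      intro x hx
      have : (x, y₀) ∈ A ∪ B := hAB ▸ Set.mem_univ _
      rcases this with hmem | hmem
      · exact absurd (Set.mem_biUnion hx hmem) hy₀
      · exact hmem
    exact hScard ((hB y₀).mono hSB)

/-- Sierpinski: CH holds iff the plane is the union of a set with all vertical
sections countable and a set with all horizontal sections countable. -/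
theorem sierpinski_decomposition_iff_CH :
    Cardinal.continuum = Cardinal.aleph 1 ↔
      ∃ A B : Set (ℝ × ℝ),
        A ∪ B = Set.univ ∧
        (∀ x : ℝ, {y : ℝ | (x, y) ∈ A}.Countable) ∧
        (∀ y : ℝ, {x : ℝ | (x, y) ∈ B}.Countable) := by
  rw [← sierpinski_aux]
  constructor
  · intro h
    rw [← Cardinal.lift_inj.{0}]
    rw [Cardinal.lift_continuum, Cardinal.lift_aleph, Ordinal.lift_one]
    exact h
  · intro h
    rw [← Cardinal.lift_continuum.{_, 0}, h, Cardinal.lift_aleph, Ordinal.lift_one]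
end

section
/- The Continuum Hypothesis holds if and only if there exists a linear order ≺ on ℝ such that for every x ∈ ℝ the initial segment {y ∈ ℝ : y ≺ x} is countable. -/
open Cardinal Set

lemma CH_iff_CH0 : (Cardinal.continuum.{u} = Cardinal.aleph 1) ↔
    (Cardinal.continuum.{0} = Cardinal.aleph 1) := by
  have h1 : (1 : Ordinal.{u}) = Ordinal.lift.{u} (1 : Ordinal.{0}) := Ordinal.lift_one.symm
  rw [h1, ← Cardinal.lift_aleph, ← Cardinal.lift_continuum.{u, 0}, Cardinal.lift_inj]

/-- CH holds iff there is a (strict) linear order on ℝ all of whose initial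
segments are countable. -/
theorem CH_iff_linear_order_countable_initial_segments :
    Cardinal.continuum = Cardinal.aleph 1 ↔
      ∃ lt : ℝ → ℝ → Prop, IsStrictTotalOrder ℝ lt ∧
        ∀ x : ℝ, {y : ℝ | lt y x}.Countable := by
  rw [CH_iff_CH0]
  constructor
  · intro hCH
    -- transport the well order of ω₁ to ℝ
    have hmk : #(((aleph 1 : Cardinal.{0})).ord.ToType) = aleph 1 := mk_ord_toType _
    have hR : #ℝ = #((aleph 1).ord.ToType) := by rw [hmk, mk_real]; exact hCH
    obtain ⟨e⟩ := Cardinal.eq.1 hR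
    refine ⟨fun a b => e a < e b,
      { irrefl := fun a => lt_irrefl _
        trans := fun a b c => lt_trans
        trichotomous := fun a b h1 h2 => by
          rcases lt_trichotomy (e a) (e b) with h | h | h
          · exact absurd h h1
          · exact e.injective h
          · exact absurd h h2 }, ?_⟩
    · intro x
      have hle : #{y : ℝ | e y < e x} ≤ #(Iio (e x)) :=
        mk_le_of_injective (f := fun y => (⟨e y.1, y.2⟩ : Iio (e x)))
          (fun a b h => Subtype.ext (e.injective (Subtype.ext_iff.1 h)))
      have hlt : #(Iio (e x)) < aleph 1 := mk_Iio_ord_toType (e x)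
      exact (countable_iff_lt_aleph_one _).2 (hle.trans_lt hlt)
  · rintro ⟨lt, hsto, hcount⟩
    refine le_antisymm ?_ aleph_one_le_continuum
    have h1 : aleph 1 ≤ #ℝ := by rw [mk_real]; exact aleph_one_le_continuum
    obtain ⟨f, hf⟩ := (Cardinal.le_def ((aleph 1 : Cardinal.{0}).ord.ToType) ℝ).1
      (le_of_eq_of_le (mk_ord_toType (aleph 1 : Cardinal.{0})) h1)
    have hcover : ∀ y : ℝ, ∃ a, lt y (f a) ∨ y = f a := by
      intro y
      by_contra h
      push_neg at h
      have hsub : Set.range f ⊆ {z : ℝ | lt z y} := by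
        rintro _ ⟨a, rfl⟩
        rcases trichotomous_of lt (f a) y with h' | h' | h'
        · exact h'
        · exact absurd h'.symm (h a).2
        · exact absurd h' (h a).1
      have : ¬ (Set.range f).Countable := by
        intro hc
        have := (countable_iff_lt_aleph_one _).1 hc
        rw [mk_range_eq _ hf, mk_ord_toType] at this
        exact lt_irrefl _ this
      exact this ((hcount y).mono hsub)
    have huniv : (Set.univ : Set ℝ) = ⋃ a, ({y : ℝ | lt y (f a)} ∪ {f a}) := by
      ext y
      simp only [mem_univ, mem_iUnion, mem_union, mem_setOf_eq, mem_singleton_iff, true_iff]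
      exact hcover y
    have : #ℝ ≤ #((aleph 1).ord.ToType) * aleph0 := by
      calc #ℝ = #(Set.univ : Set ℝ) := (mk_univ (α := ℝ)).symm
        _ = #(⋃ a, ({y : ℝ | lt y (f a)} ∪ {f a})) := by rw [huniv]
        _ ≤ #((aleph 1).ord.ToType) * ⨆ a, #({y : ℝ | lt y (f a)} ∪ {f a} : Set ℝ) :=
            mk_iUnion_le _
        _ ≤ #((aleph 1).ord.ToType) * aleph0 := by
            refine mul_le_mul_right (ciSup_le' fun a => ?_) _
            rw [mk_le_aleph0_iff]
            exact ((hcount (f a)).union (countable_singleton _))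
    rw [mk_ord_toType] at this
    rw [← mk_real]
    calc #ℝ ≤ aleph 1 * aleph0 := this
      _ = aleph 1 := by
          rw [Cardinal.mul_eq_left (aleph0_le_aleph 1) (le_of_lt aleph0_lt_aleph_one)
            aleph0_ne_zero]
end

section
/- Assume the Continuum Hypothesis. Then there exist functions F_A : ℝ → ℕ → ℝ and F_B : ℝ → ℕ → ℝ such that for every pair (x,y) ∈ ℝ × ℝ, either there exists n ∈ ℕ with F_A x n = y, or there exists n ∈ ℕ with F_B y n = x. (Equivalently, the plane is covered by the graphs A = {(x, F_A x n)} and B = {(F_B y n, y)} of countably many functions, so that all vertical sections of A and all horizontal sections of B are countable.) -/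
/-- Under CH, the plane is covered by the graphs of countably many functions of
`x` and countably many functions of `y`. -/
theorem CH_implies_cover_by_graphs
    (hCH : Cardinal.continuum = Cardinal.aleph 1) :
    ∃ F_A F_B : ℝ → ℕ → ℝ,
      ∀ x y : ℝ, (∃ n : ℕ, F_A x n = y) ∨ (∃ n : ℕ, F_B y n = x) := by
  have hCH0 : Cardinal.continuum.{0} = Cardinal.aleph.{0} 1 := by
    apply Cardinal.lift_inj.mp
    rw [Cardinal.lift_continuum, Cardinal.lift_aleph, Ordinal.lift_one]
    exact hCH
  have hmk : Cardinal.mk ℝ = Cardinal.mk (Cardinal.aleph 1).ord.ToType := by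
    rw [Cardinal.mk_real, Cardinal.mk_ord_toType]; exact hCH0
  obtain ⟨e⟩ := Cardinal.eq.mp hmk
  have key : ∀ x : ℝ, ∃ f : ℕ → ℝ,
      insert x {z : ℝ | e z < e x} = Set.range f := by
    intro x
    have hcnt : ({z : ℝ | e z < e x}).Countable := by
      rw [Cardinal.countable_iff_lt_aleph_one]
      calc Cardinal.mk {z : ℝ | e z < e x}
          ≤ Cardinal.mk (Set.Iio (e x)) :=
            Cardinal.mk_le_of_injective (f := fun z => ⟨e z.1, z.2⟩)
              (fun a b h => Subtype.ext (e.injective (Subtype.ext_iff.mp h)))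
        _ < Cardinal.aleph 1 := Cardinal.mk_Iio_ord_toType (e x)
    exact (hcnt.insert x).exists_eq_range ⟨x, Set.mem_insert _ _⟩
  choose F hF using key
  refine ⟨F, F, fun x y => ?_⟩
  rcases le_or_gt (e y) (e x) with h | h
  · left
    have hy : y ∈ insert x {z : ℝ | e z < e x} := by
      rcases lt_or_eq_of_le h with h' | h'
      · exact Set.mem_insert_of_mem _ h'
      · exact (e.injective h') ▸ Set.mem_insert _ _
    rw [hF x] at hy
    obtain ⟨n, hn⟩ := hy
    exact ⟨n, hn⟩
  · right
    have hx : x ∈ insert y {z : ℝ | e z < e y} := Set.mem_insert_of_mem _ h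
    rw [hF y] at hx
    obtain ⟨n, hn⟩ := hx
    exact ⟨n, hn⟩
end

section
/- The Continuum Hypothesis holds if and only if there exist sets A₁, A₂, A₃ ⊆ ℝ × ℝ × ℝ with A₁ ∪ A₂ ∪ A₃ = ℝ³ such that: for all b, c ∈ ℝ the set {x ∈ ℝ : (x,b,c) ∈ A₁} is finite, for all a, c ∈ ℝ the set {y ∈ ℝ : (a,y,c) ∈ A₂} is finite, and for all a, b ∈ ℝ the set {z ∈ ℝ : (a,b,z) ∈ A₃} is finite. (That is, every line parallel to the x_i-axis meets A_i in finitely many points.) -/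
open Cardinal Set

namespace SierpinskiThree

noncomputable section

/-- Forward direction: CH gives the decomposition. -/
theorem forward (h : Cardinal.continuum.{0} = Cardinal.aleph.{0} 1) :
    ∃ A₁ A₂ A₃ : Set (ℝ × ℝ × ℝ),
        A₁ ∪ A₂ ∪ A₃ = Set.univ ∧
        (∀ b c : ℝ, {x : ℝ | (x, b, c) ∈ A₁}.Finite) ∧
        (∀ a c : ℝ, {y : ℝ | (a, y, c) ∈ A₂}.Finite) ∧
        (∀ a b : ℝ, {z : ℝ | (a, b, z) ∈ A₃}.Finite) := by
  classical
  set W := (Cardinal.aleph 1).ord.ToType with hW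
  have hmk : #ℝ = #W := by
    rw [Cardinal.mk_real, h, hW, Cardinal.mk_toType, Cardinal.card_ord]
  obtain ⟨f⟩ : Nonempty (ℝ ≃ W) := Cardinal.eq.1 hmk
  -- each initial segment is countable
  have hcnt : ∀ u : W, ({s : ℝ | f s ≤ u}).Countable := by
    intro u
    have h1 : (Set.Iic u).Countable := by
      have : (Set.Iio u).Countable := by
        rw [Cardinal.countable_iff_lt_aleph_one]
        exact Cardinal.mk_Iio_ord_toType u
      simpa [Set.Iio_union_right] using this.union (Set.countable_singleton u)
    have : {s : ℝ | f s ≤ u} = f ⁻¹' (Set.Iic u) := rfl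
    rw [this]
    exact h1.preimage f.injective
  choose E hE using fun u => Set.countable_iff_exists_injOn.1 (hcnt u)
  refine ⟨{p | f p.1 ≤ max (f p.2.1) (f p.2.2) ∧
      E (max (f p.2.1) (f p.2.2)) p.1 ≤
        max (E (max (f p.2.1) (f p.2.2)) p.2.1) (E (max (f p.2.1) (f p.2.2)) p.2.2)},
    {p | f p.2.1 ≤ max (f p.1) (f p.2.2) ∧
      E (max (f p.1) (f p.2.2)) p.2.1 ≤
        max (E (max (f p.1) (f p.2.2)) p.1) (E (max (f p.1) (f p.2.2)) p.2.2)},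
    {p | f p.2.2 ≤ max (f p.1) (f p.2.1) ∧
      E (max (f p.1) (f p.2.1)) p.2.2 ≤
        max (E (max (f p.1) (f p.2.1)) p.1) (E (max (f p.1) (f p.2.1)) p.2.1)},
    ?_, ?_, ?_, ?_⟩
  · -- coverage
    ext ⟨x, y, z⟩
    simp only [Set.mem_union, Set.mem_setOf_eq, Set.mem_univ, iff_true]
    set a := f x with ha
    set b := f y with hb
    set c := f z with hc
    by_cases h1 : a ≤ max b c
    · by_cases h2 : b ≤ max a c
      · have key : max b c = max a c := by
          have e1 : max a (max b c) = max b c := max_eq_right h1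
          have e2 : max b (max a c) = max a c := max_eq_right h2
          rw [← e1, ← e2]
          rw [max_left_comm]
        rcases le_total (E (max b c) x) (E (max b c) y) with hle | hge
        · exact Or.inl (Or.inl ⟨h1, le_max_of_le_left hle⟩)
        · refine Or.inl (Or.inr ⟨h2, ?_⟩)
          rw [← key]
          exact le_max_of_le_left hge
      · -- max a c < b, so a ≤ b and c ≤ b ; pair (1,3)
        have hb' : max a c ≤ b := le_of_lt (not_le.1 h2)
        have hab : a ≤ b := le_trans (le_max_left a c) hb'
        have hcb : c ≤ b := le_trans (le_max_right a c) hb'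
        have h3 : c ≤ max a b := le_max_of_le_right hcb
        have key : max b c = max a b := by
          rw [max_eq_left hcb, max_eq_right hab]
        rcases le_total (E (max b c) x) (E (max b c) z) with hle | hge
        · exact Or.inl (Or.inl ⟨h1, le_max_of_le_right hle⟩)
        · refine Or.inr ⟨h3, ?_⟩
          rw [← key]
          exact le_max_of_le_left hge
    · -- max b c < a, pair (2,3)
      have ha' : max b c ≤ a := le_of_lt (not_le.1 h1)
      have hba : b ≤ a := le_trans (le_max_left b c) ha'
      have hca : c ≤ a := le_trans (le_max_right b c) ha'
      have h2 : b ≤ max a c := le_max_of_le_left hba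
      have h3 : c ≤ max a b := le_max_of_le_left hca
      have k2 : max a c = a := max_eq_left hca
      have k3 : max a b = a := max_eq_left hba
      rcases le_total (E a y) (E a z) with hle | hge
      · refine Or.inl (Or.inr ⟨h2, ?_⟩)
        rw [k2]
        exact le_max_of_le_right hle
      · refine Or.inr ⟨h3, ?_⟩
        rw [k3]
        exact le_max_of_le_right hge
  · -- A₁ fibers
    intro b c
    set m := max (f b) (f c) with hm
    refine Set.Finite.of_finite_image (f := E m) ?_ ((hE m).mono fun x hx => hx.1)
    refine (Set.finite_Iic (max (E m b) (E m c))).subset ?_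
    rintro n ⟨x, hx, rfl⟩
    exact hx.2
  · intro a c
    set m := max (f a) (f c) with hm
    refine Set.Finite.of_finite_image (f := E m) ?_ ((hE m).mono fun y hy => hy.1)
    refine (Set.finite_Iic (max (E m a) (E m c))).subset ?_
    rintro n ⟨y, hy, rfl⟩
    exact hy.2
  · intro a b
    set m := max (f a) (f b) with hm
    refine Set.Finite.of_finite_image (f := E m) ?_ ((hE m).mono fun z hz => hz.1)
    refine (Set.finite_Iic (max (E m a) (E m b))).subset ?_
    rintro n ⟨z, hz, rfl⟩
    exact hz.2

/-- Backward direction. -/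
theorem backward
    (h : ∃ A₁ A₂ A₃ : Set (ℝ × ℝ × ℝ),
        A₁ ∪ A₂ ∪ A₃ = Set.univ ∧
        (∀ b c : ℝ, {x : ℝ | (x, b, c) ∈ A₁}.Finite) ∧
        (∀ a c : ℝ, {y : ℝ | (a, y, c) ∈ A₂}.Finite) ∧
        (∀ a b : ℝ, {z : ℝ | (a, b, z) ∈ A₃}.Finite)) :
    Cardinal.continuum.{0} = Cardinal.aleph.{0} 1 := by
  classical
  refine le_antisymm ?_ Cardinal.aleph_one_le_continuum
  by_contra hc
  have hlt : Cardinal.aleph 1 < Cardinal.continuum := not_le.1 hc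
  obtain ⟨A₁, A₂, A₃, hcov, h1, h2, h3⟩ := h
  obtain ⟨X, hX⟩ : ∃ X : Set ℝ, #X = Cardinal.aleph 1 := by
    refine Cardinal.le_mk_iff_exists_set.1 ?_
    rw [Cardinal.mk_real]
    exact hlt.le
  -- the union of A₃-fibers over X × X misses some z₀
  set F : Set ℝ := ⋃ p : X × X, {z : ℝ | ((p.1 : ℝ), (p.2 : ℝ), z) ∈ A₃} with hF
  have hFcard : #F ≤ Cardinal.aleph 1 := by
    refine le_trans (Cardinal.mk_iUnion_le _) ?_
    have hι : #(X × X) ≤ Cardinal.aleph 1 := by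
      rw [Cardinal.mk_prod, Cardinal.lift_id, hX]
      exact (Cardinal.mul_eq_self (Cardinal.aleph0_le_aleph 1)).le
    have hsup : ⨆ p : X × X, #({z : ℝ | ((p.1 : ℝ), (p.2 : ℝ), z) ∈ A₃}) ≤ Cardinal.aleph 1 := by
      refine ciSup_le' fun p => ?_
      have : ({z : ℝ | ((p.1 : ℝ), (p.2 : ℝ), z) ∈ A₃}).Countable := (h3 _ _).countable
      exact le_trans this.le_aleph0 (Cardinal.aleph0_le_aleph 1)
    calc #(X × X) * ⨆ p : X × X, #({z : ℝ | ((p.1 : ℝ), (p.2 : ℝ), z) ∈ A₃})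
        ≤ Cardinal.aleph 1 * Cardinal.aleph 1 := mul_le_mul' hι hsup
      _ = Cardinal.aleph 1 := Cardinal.mul_eq_self (Cardinal.aleph0_le_aleph 1)
  obtain ⟨z₀, hz₀⟩ : ∃ z₀ : ℝ, z₀ ∉ F := by
    by_contra hall
    push_neg at hall
    have : F = Set.univ := Set.eq_univ_of_forall hall
    rw [this] at hFcard
    simp only [Set.mem_univ, Cardinal.mk_univ, Cardinal.mk_real] at hFcard
    exact absurd hFcard (not_le.2 hlt)
  -- X is infinite
  have hXinf : Infinite X := by
    rw [← Cardinal.aleph0_le_mk_iff, hX]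
    exact Cardinal.aleph0_le_aleph 1
  set g : ℕ ↪ X := Infinite.natEmbedding X
  set b : ℕ → ℝ := fun n => (g n : ℝ) with hbdef
  have hbinj : Function.Injective b := Subtype.coe_injective.comp g.injective
  have hbX : ∀ n, b n ∈ X := fun n => (g n).2
  -- the union of A₁-fibers over the b n's is countable
  set G : Set ℝ := ⋃ n : ℕ, {x : ℝ | (x, b n, z₀) ∈ A₁} with hG
  have hGcnt : G.Countable := Set.countable_iUnion fun n => (h1 (b n) z₀).countable
  obtain ⟨a, haX, haG⟩ : ∃ a, a ∈ X ∧ a ∉ G := by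
    by_contra hsub
    push_neg at hsub
    have : #X ≤ #G := Cardinal.mk_le_mk_of_subset hsub
    rw [hX] at this
    have : Cardinal.aleph 1 ≤ Cardinal.aleph0 := le_trans this hGcnt.le_aleph0
    exact absurd this (not_le.2 Cardinal.aleph0_lt_aleph_one)
  -- then all (a, b n, z₀) lie in A₂, contradicting finiteness
  have hmem : ∀ n, b n ∈ {y : ℝ | (a, y, z₀) ∈ A₂} := by
    intro n
    have hu : (a, b n, z₀) ∈ A₁ ∪ A₂ ∪ A₃ := by rw [hcov]; trivial
    rcases hu with (hA | hA) | hA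
    · exact absurd (Set.mem_iUnion.2 ⟨n, hA⟩) haG
    · exact hA
    · exact absurd (Set.mem_iUnion.2 ⟨(⟨a, haX⟩, ⟨b n, hbX n⟩), hA⟩) hz₀
  exact Set.infinite_of_injective_forall_mem hbinj hmem (h2 a z₀)

universe u

theorem transfer : Cardinal.continuum.{u} = Cardinal.aleph.{u} 1 ↔
    Cardinal.continuum.{0} = Cardinal.aleph.{0} 1 := by
  have l2 : Cardinal.lift.{u} (Cardinal.aleph.{0} 1) = Cardinal.aleph.{u} 1 := by
    rw [Cardinal.lift_aleph, Ordinal.lift_one]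
  rw [← Cardinal.lift_continuum.{u, 0}, ← l2, Cardinal.lift_inj]

end

end SierpinskiThree

/-- Sierpinski: CH holds iff ℝ³ is the union of three sets `A₁, A₂, A₃` such
that every line parallel to the `xᵢ`-axis meets `Aᵢ` in finitely many points. -/
theorem CH_iff_three_set_decomposition :
    Cardinal.continuum = Cardinal.aleph 1 ↔
      ∃ A₁ A₂ A₃ : Set (ℝ × ℝ × ℝ),
        A₁ ∪ A₂ ∪ A₃ = Set.univ ∧
        (∀ b c : ℝ, {x : ℝ | (x, b, c) ∈ A₁}.Finite) ∧
        (∀ a c : ℝ, {y : ℝ | (a, y, c) ∈ A₂}.Finite) ∧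
        (∀ a b : ℝ, {z : ℝ | (a, b, z) ∈ A₃}.Finite) :=
  SierpinskiThree.transfer.trans ⟨SierpinskiThree.forward, SierpinskiThree.backward⟩
end

section
/- The Continuum Hypothesis holds if and only if there exist uncountable sets A₀, A₁ ⊆ ℝ with A₀ ∪ A₁ = ℝ such that for every a ∈ ℝ the set (a + A₀) ∩ A₁ is countable, where a + A₀ = {a + x : x ∈ A₀}. -/
namespace BTaux

open Cardinal

noncomputable section

/-- Forward direction: CH gives the decomposition, via a Hamel basis. -/
lemma forward (hCH : Cardinal.continuum.{0} = Cardinal.aleph.{0} 1) :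
    ∃ A₀ A₁ : Set ℝ,
        ¬ A₀.Countable ∧ ¬ A₁.Countable ∧ A₀ ∪ A₁ = Set.univ ∧
        ∀ a : ℝ, (((fun x => a + x) '' A₀) ∩ A₁).Countable := by
  classical
  set κ := (Cardinal.aleph 1).ord.ToType with hκdef
  have hκ : #κ = Cardinal.aleph 1 := by
    rw [hκdef, Cardinal.mk_toType, Cardinal.card_ord]
  have hκunc : Uncountable κ := Cardinal.aleph0_lt_mk_iff.mp
    (by rw [hκ]; exact Cardinal.aleph0_lt_aleph_one)
  set ι := Module.Basis.ofVectorSpaceIndex ℚ ℝ with hιdef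
  have hι : #ι = Cardinal.aleph 1 := by
    apply le_antisymm
    · calc #ι ≤ #ℝ := Cardinal.mk_set_le _
        _ = Cardinal.aleph 1 := by rw [Cardinal.mk_real]; exact hCH
    · by_contra h
      push_neg at h
      rw [← Cardinal.succ_aleph0, Order.lt_succ_iff, Cardinal.mk_le_aleph0_iff] at h
      have : Countable ℝ :=
        Countable.of_equiv _ ((Module.Basis.ofVectorSpace ℚ ℝ).repr.toEquiv).symm
      exact not_countable this
  obtain ⟨e₁⟩ := Cardinal.eq.mp (hι.trans hκ.symm)
  set bb : Module.Basis κ ℚ ℝ := (Module.Basis.ofVectorSpace ℚ ℝ).reindex e₁ with hbb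
  have h2 : #(κ × Bool) = #κ := by
    rw [Cardinal.mk_prod, Cardinal.lift_id, Cardinal.lift_id, Cardinal.mk_bool, hκ]
    exact Cardinal.mul_eq_left (Cardinal.aleph0_le_aleph 1)
      ((Cardinal.nat_lt_aleph0 2).le.trans (Cardinal.aleph0_le_aleph 1)) two_ne_zero
  obtain ⟨e₂⟩ := Cardinal.eq.mp h2
  set σ : κ → Bool := fun i => (e₂.symm i).2 with hσdef
  set μ : ℝ → WithBot κ := fun x => ((bb.repr x).support).max with hμdef
  set A : Set ℝ := {x | ∀ i : κ, μ x = ↑i → σ i = false} with hAdef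
  have hbmem : ∀ j : κ, μ (bb j) = ↑j := by
    intro j
    show ((bb.repr (bb j)).support).max = (↑j : WithBot κ)
    rw [Module.Basis.repr_self, Finsupp.support_single_ne_zero _ (one_ne_zero), Finset.max_singleton]
  have hσe : ∀ (j : κ) (c : Bool), σ (e₂ (j, c)) = c := by
    intro j c; simp [hσdef]
  have hinj : ∀ c : Bool, Function.Injective (fun j : κ => bb (e₂ (j, c))) := by
    intro c a b h
    have := bb.injective h
    have := e₂.injective this
    exact (Prod.mk.injEq _ _ _ _).mp this |>.1
  have huncA : ¬ A.Countable := by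
    intro hc
    have hpre : (fun j : κ => bb (e₂ (j, false))) ⁻¹' A = Set.univ := by
      apply Set.eq_univ_of_forall
      intro j
      intro i hi
      have h1 : μ (bb (e₂ (j, false))) = ↑(e₂ (j, false)) := hbmem _
      rw [h1] at hi
      have : i = e₂ (j, false) := by exact_mod_cast hi.symm
      rw [this, hσe]
    have := hc.preimage (hinj false)
    rw [hpre, Set.countable_univ_iff] at this
    exact not_countable this
  have huncA' : ¬ Aᶜ.Countable := by
    intro hc
    have hpre : (fun j : κ => bb (e₂ (j, true))) ⁻¹' Aᶜ = Set.univ := by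
      apply Set.eq_univ_of_forall
      intro j
      intro hmem
      have h1 : μ (bb (e₂ (j, true))) = ↑(e₂ (j, true)) := hbmem _
      have := hmem (e₂ (j, true)) h1
      rw [hσe] at this
      simp at this
    have := hc.preimage (hinj true)
    rw [hpre, Set.countable_univ_iff] at this
    exact not_countable this
  refine ⟨A, Aᶜ, huncA, huncA', Set.union_compl_self A, ?_⟩
  intro a
  set F : Finset κ := (bb.repr a).support with hF
  set C : Set κ := ⋃ j ∈ F, Set.Iic j with hC
  have hCc : C.Countable := by
    apply Set.Countable.biUnion (F.countable_toSet)
    intro j _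
    rw [← Set.Iio_insert]
    exact (Set.Countable.insert j
      (((Cardinal.countable_iff_lt_aleph_one _).mpr (Cardinal.mk_Iio_ord_toType j))))
  set S : Set ℝ := {x : ℝ | ↑(bb.repr x).support ⊆ C} with hSdef
  have hSc : S.Countable := by
    have : Countable ↥C := hCc.to_subtype
    rw [← Set.countable_coe_iff]
    have hinjf : Function.Injective
        (fun x : ↥S => Finsupp.subtypeDomain (· ∈ C) (bb.repr (x : ℝ))) := by
      intro x y hxy
      apply Subtype.ext
      apply bb.repr.injective
      ext i
      by_cases hi : i ∈ C
      · have := DFunLike.congr_fun hxy ⟨i, hi⟩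
        simpa [Finsupp.subtypeDomain_apply] using this
      · have hx0 : bb.repr (x : ℝ) i = 0 := by
          by_contra h0
          exact hi (x.2 (Finsupp.mem_support_iff.mpr h0))
        have hy0 : bb.repr (y : ℝ) i = 0 := by
          by_contra h0
          exact hi (y.2 (Finsupp.mem_support_iff.mpr h0))
        rw [hx0, hy0]
    exact hinjf.countable
  have hsub : ((fun x => a + x) '' A) ∩ Aᶜ ⊆ (fun x => a + x) '' (insert 0 S) := by
    rintro y ⟨⟨x, hx, rfl⟩, hy⟩
    refine ⟨x, ?_, rfl⟩
    by_cases hx0 : x = 0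
    · exact Or.inl hx0
    right
    show ↑(bb.repr x).support ⊆ C
    have hne : ((bb.repr x).support).Nonempty :=
      Finsupp.support_nonempty_iff.mpr (by
        intro h0
        exact hx0 (by simpa using bb.repr.injective (by simp [h0])))
    set M : κ := ((bb.repr x).support).max' hne with hM
    by_cases hMC : M ∈ C
    · intro i hi
      simp only [Finset.mem_coe] at hi
      obtain ⟨j, hjF, hMj⟩ : ∃ j ∈ F, M ≤ j := by
        simpa [hC, Set.mem_iUnion] using hMC
      have : i ≤ M := Finset.le_max' _ i hi
      exact Set.mem_biUnion hjF (le_trans this hMj)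
    · exfalso
      have hltM : ∀ j ∈ F, j < M := by
        intro j hj
        by_contra hle
        push_neg at hle
        exact hMC (Set.mem_biUnion hj hle)
      have hMnF : M ∉ F := fun h => lt_irrefl M (hltM M h)
      have hrepr : bb.repr (a + x) = bb.repr a + bb.repr x := by
        rw [map_add]
      have hMmem : M ∈ (bb.repr (a + x)).support := by
        rw [Finsupp.mem_support_iff, hrepr, Finsupp.add_apply]
        have ha0 : bb.repr a M = 0 := Finsupp.notMem_support_iff.mp hMnF
        rw [ha0, zero_add]
        exact Finsupp.mem_support_iff.mp (Finset.max'_mem _ hne)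
      have hub : ∀ i ∈ (bb.repr (a + x)).support, i ≤ M := by
        intro i hi
        rw [hrepr] at hi
        rcases Finset.mem_union.mp (Finsupp.support_add hi) with h | h
        · exact (hltM i h).le
        · exact Finset.le_max' _ i h
      have hmax : μ (a + x) = ↑M := by
        have hne2 : ((bb.repr (a + x)).support).Nonempty := ⟨M, hMmem⟩
        have : ((bb.repr (a + x)).support).max' hne2 = M :=
          le_antisymm (Finset.max'_le _ _ _ hub) (Finset.le_max' _ _ hMmem)
        show ((bb.repr (a + x)).support).max = (↑M : WithBot κ)
        rw [← Finset.coe_max' hne2, this]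
      have hμx : μ x = ↑M := by
        show ((bb.repr x).support).max = (↑M : WithBot κ)
        rw [← Finset.coe_max' hne]
      have hσM : σ M = false := hx M hμx
      apply hy
      intro i hi
      rw [hmax] at hi
      have : i = M := by exact_mod_cast hi.symm
      rw [this]; exact hσM
  exact Set.Countable.mono hsub ((hSc.insert 0).image _)

/-- Key combinatorial lemma for the reverse direction (Sierpiński-style). -/
lemma aux_reverse (A B : Set ℝ) (hB : ¬ B.Countable)
    (hA2 : Cardinal.aleph 2 ≤ #A)
    (hcover : A ∪ B = Set.univ)
    (h : ∀ a : ℝ, (((fun x => a + x) '' A) ∩ B).Countable)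
    (h' : ∀ a : ℝ, (((fun x => a + x) '' B) ∩ A).Countable) : False := by
  have hB1 : Cardinal.aleph 1 ≤ #B := by
    by_contra hlt
    push_neg at hlt
    exact hB ((Cardinal.countable_iff_lt_aleph_one _).mpr hlt)
  obtain ⟨Y, hYB, hYcard⟩ := Cardinal.le_mk_iff_exists_subset.mp hB1
  set R : ℝ → Set ℝ := fun y => {x | x ∈ A ∧ x + y ∈ B} with hR
  have hRc : ∀ y : ℝ, (R y).Countable := by
    intro y
    have key : R y ⊆ (fun x => y + x) ⁻¹' (((fun x => y + x) '' A) ∩ B) := by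
      rintro x ⟨hxA, hxy⟩
      refine ⟨⟨x, hxA, rfl⟩, ?_⟩
      show y + x ∈ B
      rwa [add_comm]
    exact Set.Countable.mono key
      ((h y).preimage (add_right_injective y))
  set U : Set ℝ := ⋃ y ∈ Y, R y with hU
  have hUcard : #U < Cardinal.aleph 2 := by
    have hle : #U ≤ #Y * ⨆ y : Y, #(R y.1) := Cardinal.mk_biUnion_le R Y
    have hne : Nonempty ↥Y := by
      rw [← Cardinal.mk_ne_zero_iff, hYcard]
      exact (Cardinal.aleph0_lt_aleph_one.trans_le' Cardinal.aleph0_pos.le).ne'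
    have hsup : (⨆ y : Y, #(R y.1)) ≤ Cardinal.aleph0 := by
      apply ciSup_le'
      intro y
      exact Cardinal.mk_le_aleph0_iff.mpr (hRc y.1).to_subtype
    calc #U ≤ #Y * ⨆ y : Y, #(R y.1) := hle
      _ ≤ Cardinal.aleph 1 * Cardinal.aleph0 := by
          rw [hYcard]
          exact mul_le_mul_right hsup _
      _ = Cardinal.aleph 1 :=
          Cardinal.mul_eq_left (Cardinal.aleph0_le_aleph 1) (Cardinal.aleph0_le_aleph 1)
            Cardinal.aleph0_ne_zero
      _ < Cardinal.aleph 2 := Cardinal.aleph_lt_aleph.mpr (by norm_num)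
  have hAU : ¬ A ⊆ U := by
    intro hsub
    exact absurd (le_trans hA2 (Cardinal.mk_le_mk_of_subset hsub)) hUcard.not_ge
  obtain ⟨x, hxA, hxU⟩ := Set.not_subset.mp hAU
  have hYsub : Y ⊆ (fun y => x + y) ⁻¹' (((fun z => x + z) '' B) ∩ A) := by
    intro y hyY
    have hxy : x + y ∈ A := by
      rcases (Set.eq_univ_iff_forall.mp hcover (x + y)) with hA' | hB'
      · exact hA'
      · have hxR : x ∈ R y := by
          simp only [hR, Set.mem_setOf_eq]
          exact ⟨hxA, hB'⟩
        exact absurd (Set.mem_biUnion hyY hxR) hxU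
    show x + y ∈ ((fun z => x + z) '' B) ∩ A
    exact ⟨⟨y, hYB hyY, rfl⟩, hxy⟩
  have : Y.Countable :=
    Set.Countable.mono hYsub ((h' x).preimage (add_right_injective x))
  rw [Cardinal.countable_iff_lt_aleph_one, hYcard] at this
  exact lt_irrefl _ this

lemma CH_iff_CH0 : (Cardinal.continuum.{u} = Cardinal.aleph.{u} 1) ↔
    (Cardinal.continuum.{0} = Cardinal.aleph.{0} 1) := by
  have h1 : Cardinal.lift.{u} Cardinal.continuum.{0} = Cardinal.continuum.{u} :=
    Cardinal.lift_continuum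
  have h2 : Cardinal.lift.{u} (Cardinal.aleph.{0} 1) = Cardinal.aleph.{u} 1 := by
    rw [Cardinal.lift_aleph, Ordinal.lift_one]
  rw [← h1, ← h2, Cardinal.lift_inj]

end

end BTaux

open Cardinal

/-- Banach–Trzeciakiewicz: CH holds iff ℝ is the union of two uncountable sets
`A₀, A₁` such that `(a + A₀) ∩ A₁` is countable for every `a`. -/
theorem CH_iff_banach_trzeciakiewicz :
    Cardinal.continuum = Cardinal.aleph 1 ↔
      ∃ A₀ A₁ : Set ℝ,
        ¬ A₀.Countable ∧ ¬ A₁.Countable ∧ A₀ ∪ A₁ = Set.univ ∧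
        ∀ a : ℝ, (((fun x => a + x) '' A₀) ∩ A₁).Countable := by
  rw [BTaux.CH_iff_CH0]
  constructor
  · exact BTaux.forward
  · rintro ⟨A₀, A₁, h₀, h₁, hcover, h⟩
    by_contra hne
    have hlt : Cardinal.aleph 1 < Cardinal.continuum :=
      lt_of_le_of_ne Cardinal.aleph_one_le_continuum (Ne.symm hne)
    have h2c : Cardinal.aleph 2 ≤ Cardinal.continuum := by
      have : Order.succ (Cardinal.aleph 1) ≤ Cardinal.continuum := Order.succ_le_of_lt hlt
      rwa [← Cardinal.aleph_succ, (by norm_num : Order.succ (1 : Ordinal) = 2)] at this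
    -- symmetric countability
    have h' : ∀ a : ℝ, (((fun x => a + x) '' A₁) ∩ A₀).Countable := by
      intro a
      have hid : ((fun x => a + x) '' A₁) ∩ A₀ =
          (fun x => a + x) '' (((fun x => (-a) + x) '' A₀) ∩ A₁) := by
        ext z
        constructor
        · rintro ⟨⟨w, hw, rfl⟩, hz⟩
          exact ⟨w, ⟨⟨a + w, hz, by show -a + (a + w) = w; ring⟩, hw⟩, rfl⟩
        · rintro ⟨w, ⟨⟨u, hu, hu'⟩, hw⟩, rfl⟩
          have hu2 : -a + u = w := hu'
          refine ⟨⟨w, hw, rfl⟩, ?_⟩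
          show a + w ∈ A₀
          have huw : a + w = u := by linarith
          rwa [huw]
      rw [hid]
      exact (h (-a)).image _
    -- one of the sets has size ≥ ℵ₂
    have hsum : Cardinal.aleph 2 ≤ #A₀ + #A₁ := by
      calc Cardinal.aleph 2 ≤ Cardinal.continuum := h2c
        _ = #(Set.univ : Set ℝ) := by rw [Cardinal.mk_univ, Cardinal.mk_real]
        _ = #(A₀ ∪ A₁ : Set ℝ) := by rw [hcover]
        _ ≤ #A₀ + #A₁ := Cardinal.mk_union_le _ _
    have hcase : Cardinal.aleph 2 ≤ #A₀ ∨ Cardinal.aleph 2 ≤ #A₁ := by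
      by_contra hc
      push_neg at hc
      exact absurd hsum (Cardinal.add_lt_of_lt (Cardinal.aleph0_le_aleph 2) hc.1 hc.2).not_ge
    rcases hcase with hc | hc
    · exact BTaux.aux_reverse A₀ A₁ h₁ hc hcover h h'
    · exact BTaux.aux_reverse A₁ A₀ h₀ hc (by rw [Set.union_comm]; exact hcover) h' h
end

section
/- The Continuum Hypothesis holds if and only if the plane ℝ × ℝ can be covered by three clouds, i.e., there exist sets A₀, A₁, A₂ ⊆ ℝ × ℝ with A₀ ∪ A₁ ∪ A₂ = ℝ × ℝ such that each Aᵢ is a cloud. -/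
/-- A set `A ⊆ ℝ²` is a *cloud* if there is a centre `c` such that every
infinite ray emanating from `c` meets `A` in finitely many points. -/
def IsCloud (A : Set (ℝ × ℝ)) : Prop :=
  ∃ c : ℝ × ℝ, ∀ v : ℝ × ℝ, v ≠ 0 → {t : ℝ | 0 ≤ t ∧ c + t • v ∈ A}.Finite

noncomputable section
namespace CloudsKomjath
open Cardinal Set

/-- finiteness on full lines through the centre -/
lemma line_finite {A : Set (ℝ × ℝ)} {c : ℝ × ℝ}
    (h : ∀ v : ℝ × ℝ, v ≠ 0 → {t : ℝ | 0 ≤ t ∧ c + t • v ∈ A}.Finite)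
    {v : ℝ × ℝ} (hv : v ≠ 0) : {t : ℝ | c + t • v ∈ A}.Finite := by
  have h1 := h v hv
  have h2 := (h (-v) (neg_ne_zero.2 hv)).image (fun t => -t)
  refine Set.Finite.subset (h1.union h2) ?_
  intro t ht
  rcases le_total 0 t with h0 | h0
  · exact Or.inl ⟨h0, ht⟩
  · refine Or.inr ⟨-t, ⟨by linarith, ?_⟩, by ring⟩
    simpa [smul_neg] using ht

lemma exists_injOn_nat {s : Set ℝ} (hs : s.Countable) : ∃ f : ℝ → ℕ, Set.InjOn f s := by
  classical
  rcases Set.countable_iff_exists_injective.mp hs with ⟨g, hg⟩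
  refine ⟨fun x => if h : x ∈ s then g ⟨x, h⟩ else 0, fun a ha b hb hab => ?_⟩
  simp only [dif_pos ha, dif_pos hb] at hab
  exact Subtype.ext_iff.mp (hg hab)

lemma point_eq (c v : ℝ × ℝ) (t : ℝ) : c + t • v = (c.1 + t * v.1, c.2 + t * v.2) := by
  ext <;> simp

lemma subsingleton_solutions (c : ℝ) : {t : ℝ | t * c = 1}.Subsingleton := by
  intro t ht t' ht'
  have hc : c ≠ 0 := by rintro rfl; simp at ht
  have : t * c = t' * c := by rw [ht, ht']
  exact mul_right_cancel₀ hc this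

/-- the three recovery operations -/
def e0 (b c : ℝ) : ℝ := b * (1 + c) / (1 + b)
def e1 (a c : ℝ) : ℝ := a / (1 - a + c)
def e2 (a b : ℝ) : ℝ := a - 1 + a / b

def ClosedOps (T : Set ℝ) : Prop :=
  (∀ a ∈ T, ∀ b ∈ T, e0 a b ∈ T) ∧ (∀ a ∈ T, ∀ b ∈ T, e1 a b ∈ T) ∧
    (∀ a ∈ T, ∀ b ∈ T, e2 a b ∈ T)

def Fstep (T : Set ℝ) : Set ℝ :=
  T ∪ Set.image2 e0 T T ∪ Set.image2 e1 T T ∪ Set.image2 e2 T T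

def cl (S : Set ℝ) : Set ℝ := ⋃ n, Fstep^[n] S

lemma subset_Fstep (T : Set ℝ) : T ⊆ Fstep T := by
  intro x hx; exact Or.inl (Or.inl (Or.inl hx))

lemma Fstep_mono {S T : Set ℝ} (h : S ⊆ T) : Fstep S ⊆ Fstep T := by
  refine Set.union_subset_union (Set.union_subset_union (Set.union_subset_union h ?_) ?_) ?_ <;>
    exact Set.image2_subset h h

lemma iter_mono_subset {S : Set ℝ} {n m : ℕ} (h : n ≤ m) : Fstep^[n] S ⊆ Fstep^[m] S := by
  induction m with
  | zero => simpa [Nat.le_zero.mp h] using subset_rfl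
  | succ m ih =>
    rcases Nat.lt_or_ge n (m+1) with h' | h'
    · refine (ih (Nat.lt_succ_iff.mp h')).trans ?_
      rw [Function.iterate_succ_apply']
      exact subset_Fstep _
    · have : n = m + 1 := le_antisymm h h'
      simp [this]

lemma subset_cl (S : Set ℝ) : S ⊆ cl S := by
  intro x hx; exact Set.mem_iUnion.2 ⟨0, hx⟩

lemma iter_mono {S T : Set ℝ} (h : S ⊆ T) : ∀ n, Fstep^[n] S ⊆ Fstep^[n] T := by
  intro n
  induction n with
  | zero => simpa using h
  | succ n ih =>
    rw [Function.iterate_succ_apply', Function.iterate_succ_apply']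
    exact Fstep_mono ih

lemma cl_mono {S T : Set ℝ} (h : S ⊆ T) : cl S ⊆ cl T := by
  intro x hx
  rcases Set.mem_iUnion.1 hx with ⟨n, hn⟩
  exact Set.mem_iUnion.2 ⟨n, iter_mono h n hn⟩

lemma cl_countable {S : Set ℝ} (h : S.Countable) : (cl S).Countable := by
  refine Set.countable_iUnion (fun n => ?_)
  induction n with
  | zero => simpa using h
  | succ n ih =>
    rw [Function.iterate_succ_apply']
    exact (((ih.union (ih.image2 ih _)).union (ih.image2 ih _)).union (ih.image2 ih _))

lemma cl_closed (S : Set ℝ) : ClosedOps (cl S) := by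
  have main : ∀ (a : ℝ), a ∈ cl S → ∀ (b : ℝ), b ∈ cl S →
      e0 a b ∈ cl S ∧ e1 a b ∈ cl S ∧ e2 a b ∈ cl S := by
    intro a ha b hb
    rcases Set.mem_iUnion.1 ha with ⟨n, hn⟩
    rcases Set.mem_iUnion.1 hb with ⟨m, hm⟩
    have ha' : a ∈ Fstep^[max n m] S := iter_mono_subset (le_max_left n m) hn
    have hb' : b ∈ Fstep^[max n m] S := iter_mono_subset (le_max_right n m) hm
    have h0 : e0 a b ∈ Fstep^[max n m + 1] S := by
      rw [Function.iterate_succ_apply']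
      exact Or.inl (Or.inl (Or.inr (Set.mem_image2_of_mem ha' hb')))
    have h1 : e1 a b ∈ Fstep^[max n m + 1] S := by
      rw [Function.iterate_succ_apply']
      exact Or.inl (Or.inr (Set.mem_image2_of_mem ha' hb'))
    have h2 : e2 a b ∈ Fstep^[max n m + 1] S := by
      rw [Function.iterate_succ_apply']
      exact Or.inr (Set.mem_image2_of_mem ha' hb')
    exact ⟨Set.mem_iUnion.2 ⟨_, h0⟩, Set.mem_iUnion.2 ⟨_, h1⟩, Set.mem_iUnion.2 ⟨_, h2⟩⟩
  exact ⟨fun a ha b hb => (main a ha b hb).1, fun a ha b hb => (main a ha b hb).2.1,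
    fun a ha b hb => (main a ha b hb).2.2⟩

abbrev Wty : Type := (Cardinal.aleph 1).ord.ToType

lemma Wty_card : #Wty = Cardinal.aleph 1 := by
  rw [Cardinal.mk_toType, Cardinal.card_ord]

lemma Wty_seg_countable (w : Wty) : ({v : Wty | v < w} : Set Wty).Countable := by
  have h2 : #(Set.Iio w) < Cardinal.aleph 1 := Cardinal.mk_Iio_ord_toType w
  have : ({v : Wty | v < w} : Set Wty) = Set.Iio w := rfl
  rw [this, Cardinal.countable_iff_lt_aleph_one]
  exact h2

lemma Wty_Iic_countable (w : Wty) : ({v : Wty | v ≤ w} : Set Wty).Countable := by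
  have : ({v : Wty | v ≤ w} : Set Wty) ⊆ insert w {v : Wty | v < w} := by
    intro v hv
    have hv' : v ≤ w := hv
    rcases lt_or_eq_of_le hv' with h | h
    · exact Set.mem_insert_of_mem _ h
    · simp [h]
  exact ((Wty_seg_countable w).insert w).mono this

lemma Wty_wf : WellFounded ((· < ·) : Wty → Wty → Prop) := IsWellFounded.wf

/-! ### rank machinery -/

def Kf (φ : ℝ ≃ Wty) (w : Wty) : Set ℝ := cl {x | φ x ≤ w}

lemma Kf_countable (φ : ℝ ≃ Wty) (w : Wty) : (Kf φ w).Countable := by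
  refine cl_countable ?_
  have : {x | φ x ≤ w} = φ ⁻¹' {v | v ≤ w} := rfl
  rw [this]
  exact (Wty_Iic_countable w).preimage φ.injective

lemma Kf_mono (φ : ℝ ≃ Wty) {w w' : Wty} (h : w ≤ w') : Kf φ w ⊆ Kf φ w' :=
  cl_mono (fun x hx => le_trans hx h)

lemma Kf_closed (φ : ℝ ≃ Wty) (w : Wty) : ClosedOps (Kf φ w) := cl_closed _

lemma mem_Kf_self (φ : ℝ ≃ Wty) (x : ℝ) : x ∈ Kf φ (φ x) := subset_cl _ (le_refl (φ x))

def rk (φ : ℝ ≃ Wty) (x : ℝ) : Wty :=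
  Wty_wf.min {w | x ∈ Kf φ w} ⟨φ x, mem_Kf_self φ x⟩

lemma rk_mem (φ : ℝ ≃ Wty) (x : ℝ) : x ∈ Kf φ (rk φ x) :=
  Wty_wf.min_mem {w | x ∈ Kf φ w} ⟨φ x, mem_Kf_self φ x⟩

lemma rk_le (φ : ℝ ≃ Wty) {x : ℝ} {w : Wty} (h : x ∈ Kf φ w) : rk φ x ≤ w := by
  by_contra hlt
  exact Wty_wf.not_lt_min _ h (not_le.mp hlt)

def iot (φ : ℝ ≃ Wty) (w : Wty) : ℝ → ℕ := (exists_injOn_nat (Kf_countable φ w)).choose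

lemma iot_inj (φ : ℝ ≃ Wty) (w : Wty) : Set.InjOn (iot φ w) (Kf φ w) :=
  (exists_injOn_nat (Kf_countable φ w)).choose_spec

def mxr (z : Fin 3 → ℝ × ℝ → ℝ) (φ : ℝ ≃ Wty) (p : ℝ × ℝ) : Wty :=
  rk φ (z 0 p) ⊔ rk φ (z 1 p) ⊔ rk φ (z 2 p)

lemma le_mxr (z : Fin 3 → ℝ × ℝ → ℝ) (φ : ℝ ≃ Wty) (p : ℝ × ℝ) (i : Fin 3) :
    rk φ (z i p) ≤ mxr z φ p := by
  fin_cases i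
  · exact le_sup_of_le_left le_sup_left
  · exact le_sup_of_le_left le_sup_right
  · exact le_sup_right

def keyf (z : Fin 3 → ℝ × ℝ → ℝ) (φ : ℝ ≃ Wty) (p : ℝ × ℝ) (i : Fin 3) : Lex (Wty × ℕ) :=
  toLex (rk φ (z i p), iot φ (mxr z φ p) (z i p))

def self3 (z : Fin 3 → ℝ × ℝ → ℝ) (φ : ℝ ≃ Wty) (p : ℝ × ℝ) : Fin 3 :=
  if keyf z φ p 1 ≤ keyf z φ p 0 ∧ keyf z φ p 2 ≤ keyf z φ p 0 then 0
  else if keyf z φ p 2 ≤ keyf z φ p 1 then 1 else 2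

lemma self3_max (z : Fin 3 → ℝ × ℝ → ℝ) (φ : ℝ ≃ Wty) (p : ℝ × ℝ) (j : Fin 3) :
    keyf z φ p j ≤ keyf z φ p (self3 z φ p) := by
  unfold self3
  by_cases h0 : keyf z φ p 1 ≤ keyf z φ p 0 ∧ keyf z φ p 2 ≤ keyf z φ p 0
  · rw [if_pos h0]
    fin_cases j
    · exact le_refl _
    · exact h0.1
    · exact h0.2
  · rw [if_neg h0]
    by_cases h1 : keyf z φ p 2 ≤ keyf z φ p 1
    · rw [if_pos h1]
      have hk01 : keyf z φ p 0 ≤ keyf z φ p 1 := by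
        rcases not_and_or.mp h0 with h | h
        · exact (not_le.mp h).le
        · exact le_trans (not_le.mp h).le h1
      fin_cases j
      · exact hk01
      · exact le_refl _
      · exact h1
    · rw [if_neg h1]
      have h12 : keyf z φ p 1 ≤ keyf z φ p 2 := (not_le.mp h1).le
      have h02 : keyf z φ p 0 ≤ keyf z φ p 2 := by
        rcases not_and_or.mp h0 with h | h
        · exact le_trans (not_le.mp h).le h12
        · exact (not_le.mp h).le
      fin_cases j
      · exact h02
      · exact h12
      · exact le_refl _

lemma other_two (i : Fin 3) : ∃ j1 j2 : Fin 3, j1 ≠ i ∧ j2 ≠ i ∧ j1 ≠ j2 ∧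
    ∀ j : Fin 3, j ≠ i → j = j1 ∨ j = j2 := by
  fin_cases i
  · exact ⟨1, 2, by decide, by decide, by decide, by decide⟩
  · exact ⟨0, 2, by decide, by decide, by decide, by decide⟩
  · exact ⟨0, 1, by decide, by decide, by decide, by decide⟩

theorem core (z : Fin 3 → ℝ × ℝ → ℝ) (R : Set (ℝ × ℝ))
    (hdet : ∀ i j : Fin 3, i ≠ j → ∀ p ∈ R, ∀ q ∈ R,
      z i p = z i q → z j p = z j q → p = q)
    (hclz : ∀ T : Set ℝ, ClosedOps T → ∀ p ∈ R, ∀ i : Fin 3,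
      (∀ j : Fin 3, j ≠ i → z j p ∈ T) → z i p ∈ T)
    (hCH : Cardinal.continuum.{0} = Cardinal.aleph.{0} 1) :
    ∃ C : Fin 3 → Set (ℝ × ℝ), (∀ i, C i ⊆ R) ∧ (∀ p ∈ R, ∃ i, p ∈ C i) ∧
      ∀ i a, {p | p ∈ C i ∧ z i p = a}.Finite := by
  have hRcard : #ℝ = #Wty := by rw [Cardinal.mk_real, hCH, Wty_card]
  obtain ⟨φ⟩ := Cardinal.eq.mp hRcard
  refine ⟨fun i => {p | p ∈ R ∧ self3 z φ p = i}, fun i p hp => hp.1,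
    fun p hp => ⟨self3 z φ p, hp, rfl⟩, ?_⟩
  intro i a
  -- the finite target set
  set N := iot φ (rk φ a) a with hN
  set V : Set ℝ := {y | y ∈ Kf φ (rk φ a) ∧ iot φ (rk φ a) y ≤ N} with hV
  have hVfin : V.Finite := by
    have himg : (iot φ (rk φ a)) '' V ⊆ ↑(Finset.range (N + 1)) := by
      rintro n ⟨y, hy, rfl⟩
      simp only [Finset.coe_range, Set.mem_Iio]
      exact Nat.lt_succ_of_le hy.2
    exact Set.Finite.of_finite_image
      (((Finset.range (N + 1)).finite_toSet).subset himg)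
      ((iot_inj φ (rk φ a)).mono (fun y hy => hy.1))
  have hsubset : {p | p ∈ {p | p ∈ R ∧ self3 z φ p = i} ∧ z i p = a} ⊆
      ⋃ (j : Fin 3), ⋃ (v ∈ V),
        (if j = i then (∅ : Set (ℝ × ℝ)) else {p | p ∈ R ∧ z i p = a ∧ z j p = v}) := by
    rintro p ⟨⟨hpR, hpsel⟩, hpz⟩
    have hwi : rk φ (z i p) = rk φ a := by rw [hpz]
    have hrank_le : ∀ j, rk φ (z j p) ≤ rk φ (z i p) := by
      intro j
      have hk := self3_max z φ p j
      rw [hpsel] at hk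
      rcases Prod.Lex.le_iff.mp hk with h | h
      · exact h.le
      · exact h.1.le
    have hmxi : mxr z φ p = rk φ (z i p) := by
      refine le_antisymm ?_ (le_mxr z φ p i)
      exact sup_le (sup_le (hrank_le 0) (hrank_le 1)) (hrank_le 2)
    -- top two equal
    obtain ⟨j1, j2, hj1, hj2, hj12, hcov⟩ := other_two i
    have hji_mem : z i p ∈ Kf φ (rk φ (z j1 p) ⊔ rk φ (z j2 p)) := by
      refine hclz _ (Kf_closed φ _) p hpR i (fun j hj => ?_)
      rcases hcov j hj with rfl | rfl
      · exact Kf_mono φ le_sup_left (rk_mem φ _)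
      · exact Kf_mono φ le_sup_right (rk_mem φ _)
    have hle : rk φ (z i p) ≤ rk φ (z j1 p) ⊔ rk φ (z j2 p) := rk_le φ hji_mem
    have htop : ∃ j, j ≠ i ∧ rk φ (z j p) = rk φ (z i p) := by
      rcases le_total (rk φ (z j1 p)) (rk φ (z j2 p)) with h | h
      · refine ⟨j2, hj2, le_antisymm (hrank_le j2) ?_⟩
        calc rk φ (z i p) ≤ _ := hle
          _ = rk φ (z j2 p) := sup_eq_right.mpr h
      · refine ⟨j1, hj1, le_antisymm (hrank_le j1) ?_⟩
        calc rk φ (z i p) ≤ _ := hle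
          _ = rk φ (z j1 p) := sup_eq_left.mpr h
    obtain ⟨j, hji, hjrank⟩ := htop
    have hkey_le := self3_max z φ p j
    rw [hpsel] at hkey_le
    have hidx : iot φ (mxr z φ p) (z j p) ≤ iot φ (mxr z φ p) (z i p) := by
      rcases Prod.Lex.le_iff.mp hkey_le with h | h
      · change rk φ (z j p) < rk φ (z i p) at h
        rw [hjrank] at h
        exact absurd h (lt_irrefl _)
      · exact h.2
    have hmxa : mxr z φ p = rk φ a := hmxi.trans hwi
    have hjK : z j p ∈ Kf φ (rk φ a) := by
      rw [← hwi, ← hjrank]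
      exact rk_mem φ _
    have hidx' : iot φ (rk φ a) (z j p) ≤ N := by
      have := hidx
      rw [hmxa, hpz] at this
      exact this
    refine Set.mem_iUnion.2 ⟨j, Set.mem_iUnion.2 ⟨z j p, Set.mem_iUnion.2 ⟨⟨hjK, hidx'⟩, ?_⟩⟩⟩
    rw [if_neg hji]
    exact ⟨hpR, hpz, rfl⟩
  refine Set.Finite.subset ?_ hsubset
  refine Set.finite_iUnion (fun j => ?_)
  refine Set.Finite.biUnion hVfin (fun v _ => ?_)
  by_cases hji : j = i
  · rw [if_pos hji]; exact Set.finite_empty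
  · rw [if_neg hji]
    refine Set.Subsingleton.finite (fun p hp q hq => ?_)
    exact hdet i j (Ne.symm hji) p hp.1 q hq.1 (hp.2.1.trans hq.2.1.symm)
      (hp.2.2.trans hq.2.2.symm)

/-- the generic region -/
def Rg : Set (ℝ × ℝ) := {p | p.1 ≠ 0 ∧ p.1 ≠ 1 ∧ p.2 ≠ 0 ∧ p.1 + p.2 ≠ 1}

/-- the three slope coordinates -/
def zc : Fin 3 → ℝ × ℝ → ℝ := ![fun p => p.2 / p.1, fun p => p.2 / (p.1 - 1),
  fun p => (p.2 - 1) / p.1]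

lemma zc0 (p : ℝ × ℝ) : zc 0 p = p.2 / p.1 := rfl
lemma zc1 (p : ℝ × ℝ) : zc 1 p = p.2 / (p.1 - 1) := rfl
lemma zc2 (p : ℝ × ℝ) : zc 2 p = (p.2 - 1) / p.1 := rfl

lemma det01 : ∀ p ∈ Rg, ∀ q ∈ Rg, zc 0 p = zc 0 q → zc 1 p = zc 1 q → p = q := by
  rintro ⟨x1, y1⟩ ⟨hx1, hx1', hy1, hs1⟩ ⟨x2, y2⟩ ⟨hx2, hx2', hy2, hs2⟩ h0 h1
  rw [zc0, zc0] at h0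
  rw [zc1, zc1] at h1
  simp only at h0 h1 hx1 hx1' hy1 hs1 hx2 hx2' hy2 hs2
  have e1' : y1 * x2 = y2 * x1 := by
    field_simp at h0
    linarith [h0]
  have e2' : y1 * (x2 - 1) = y2 * (x1 - 1) := by
    rw [div_eq_div_iff (sub_ne_zero.2 hx1') (sub_ne_zero.2 hx2')] at h1
    linarith [h1]
  have hy : y1 = y2 := by nlinarith [e1', e2']
  have hx : x1 = x2 := by
    have : y1 * x2 = y1 * x1 := by rw [e1', hy]
    exact (mul_left_cancel₀ hy1 this).symm
  simp [hx, hy]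

lemma det02 : ∀ p ∈ Rg, ∀ q ∈ Rg, zc 0 p = zc 0 q → zc 2 p = zc 2 q → p = q := by
  rintro ⟨x1, y1⟩ ⟨hx1, hx1', hy1, hs1⟩ ⟨x2, y2⟩ ⟨hx2, hx2', hy2, hs2⟩ h0 h2
  rw [zc0, zc0] at h0
  rw [zc2, zc2] at h2
  simp only at h0 h2 hx1 hx1' hy1 hs1 hx2 hx2' hy2 hs2
  have e1' : y1 * x2 = y2 * x1 := by
    field_simp at h0
    linarith [h0]
  have e2' : (y1 - 1) * x2 = (y2 - 1) * x1 := by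
    rw [div_eq_div_iff hx1 hx2] at h2
    linarith [h2]
  have hx : x1 = x2 := by nlinarith [e1', e2']
  have hy : y1 = y2 := by
    have : y1 * x1 = y2 * x1 := by rw [← hx] at e1'; linarith [e1']
    exact mul_right_cancel₀ hx1 this
  simp [hx, hy]

lemma det12 : ∀ p ∈ Rg, ∀ q ∈ Rg, zc 1 p = zc 1 q → zc 2 p = zc 2 q → p = q := by
  rintro ⟨x1, y1⟩ ⟨hx1, hx1', hy1, hs1⟩ ⟨x2, y2⟩ ⟨hx2, hx2', hy2, hs2⟩ h1 h2
  rw [zc1, zc1] at h1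
  rw [zc2, zc2] at h2
  simp only at h1 h2 hx1 hx1' hy1 hs1 hx2 hx2' hy2 hs2
  have e1' : y1 * (x2 - 1) = y2 * (x1 - 1) := by
    rw [div_eq_div_iff (sub_ne_zero.2 hx1') (sub_ne_zero.2 hx2')] at h1
    linarith [h1]
  have e2' : (y1 - 1) * x2 = (y2 - 1) * x1 := by
    rw [div_eq_div_iff hx1 hx2] at h2
    linarith [h2]
  have hs : x1 + y1 = x2 + y2 := by linarith [e1', e2']
  have hfac : (x1 + y1 - 1) * (x2 - x1) = 0 := by linear_combination e1' - (x1 - 1) * hs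
  have hx : x1 = x2 := by
    rcases mul_eq_zero.mp hfac with h | h
    · exact absurd (by linarith : x1 + y1 = 1) hs1
    · linarith
  have hy : y1 = y2 := by linarith [hs, hx]
  simp [hx, hy]

lemma zc_det : ∀ i j : Fin 3, i ≠ j → ∀ p ∈ Rg, ∀ q ∈ Rg,
    zc i p = zc i q → zc j p = zc j q → p = q := by
  intro i j hij p hp q hq hi hj
  fin_cases i <;> fin_cases j <;> first
    | exact absurd rfl hij
    | exact det01 p hp q hq hi hj
    | exact det01 p hp q hq hj hi
    | exact det02 p hp q hq hi hj
    | exact det02 p hp q hq hj hi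
    | exact det12 p hp q hq hi hj
    | exact det12 p hp q hq hj hi

lemma id0 (x y : ℝ) (hx : x ≠ 0) (hx' : x - 1 ≠ 0) (hs : x + y - 1 ≠ 0) :
    e0 (y/(x-1)) ((y-1)/x) = y/x := by
  rw [e0]
  rw [show (1 + (y-1)/x) = (x+y-1)/x by field_simp; ring]
  rw [show (1 + y/(x-1)) = (x+y-1)/(x-1) by field_simp; ring]
  field_simp

lemma id1 (x y : ℝ) (hx : x ≠ 0) (hx' : x - 1 ≠ 0) :
    e1 (y/x) ((y-1)/x) = y/(x-1) := by
  rw [e1]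
  rw [show (1 - y/x + (y-1)/x) = (x-1)/x by field_simp; ring]
  field_simp

lemma id2 (x y : ℝ) (hx : x ≠ 0) (hy : y ≠ 0) :
    e2 (y/x) (y/(x-1)) = (y-1)/x := by
  rw [e2]
  field_simp
  ring

/-- the closure property: each coordinate is obtained from the other two by e-ops -/
lemma zc_closed : ∀ T : Set ℝ, ClosedOps T → ∀ p ∈ Rg, ∀ i : Fin 3,
    (∀ j : Fin 3, j ≠ i → zc j p ∈ T) → zc i p ∈ T := by
  rintro T ⟨hT0, hT1, hT2⟩ ⟨x, y⟩ ⟨hx, hx', hy, hs⟩ i hmem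
  simp only at hx hx' hy hs
  have dx1 : x - 1 ≠ 0 := sub_ne_zero.2 hx'
  have ds1 : x + y - 1 ≠ 0 := by intro h; exact hs (by linarith)
  fin_cases i
  · have h1 := hmem 1 (by decide)
    have h2 := hmem 2 (by decide)
    show zc 0 (x, y) ∈ T
    rw [zc0]
    simp only
    rw [← id0 x y hx dx1 ds1]
    exact hT0 _ h1 _ h2
  · have h0 := hmem 0 (by decide)
    have h2 := hmem 2 (by decide)
    show zc 1 (x, y) ∈ T
    rw [zc1]
    simp only
    rw [← id1 x y hx dx1]
    exact hT1 _ h0 _ h2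
  · have h0 := hmem 0 (by decide)
    have h1 := hmem 1 (by decide)
    show zc 2 (x, y) ∈ T
    rw [zc2]
    simp only
    rw [← id2 x y hx hy]
    exact hT2 _ h0 _ h1

lemma core_out (hCH : Cardinal.continuum.{0} = Cardinal.aleph.{0} 1) :
    ∃ C : Fin 3 → Set (ℝ × ℝ), (∀ i, C i ⊆ Rg) ∧ (∀ p ∈ Rg, ∃ i, p ∈ C i) ∧
      ∀ i a, {p | p ∈ C i ∧ zc i p = a}.Finite :=
  core zc Rg zc_det zc_closed hCH

lemma inj_ray (c v : ℝ × ℝ) (hv : v ≠ 0) : Function.Injective (fun t : ℝ => c + t • v) := by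
  intro t t' h
  simp only [point_eq, Prod.mk.injEq] at h
  have h1 : t * v.1 = t' * v.1 := by linarith [h.1]
  have h2 : t * v.2 = t' * v.2 := by linarith [h.2]
  by_cases hv1 : v.1 = 0
  · have hv2 : v.2 ≠ 0 := by
      intro hv2
      exact hv (Prod.ext hv1 hv2)
    exact mul_right_cancel₀ hv2 h2
  · exact mul_right_cancel₀ hv1 h1

/-- finiteness of the C-piece on a ray -/
lemma C_piece_finite (C : Set (ℝ × ℝ)) (i : Fin 3) (hsub : C ⊆ Rg)
    (hfin : ∀ a, {p | p ∈ C ∧ zc i p = a}.Finite) (c v : ℝ × ℝ) (hv : v ≠ 0)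
    (hslope : ∀ t : ℝ, (c + t • v) ∈ C → zc i (c + t • v) = v.2 / v.1) :
    {t : ℝ | c + t • v ∈ C}.Finite := by
  have heq : {t : ℝ | c + t • v ∈ C} =
      (fun t : ℝ => c + t • v) ⁻¹' {p | p ∈ C ∧ zc i p = v.2 / v.1} := by
    ext t
    simp only [Set.mem_setOf_eq, Set.mem_preimage]
    exact ⟨fun h => ⟨h, hslope t h⟩, fun h => h.1⟩
  rw [heq]
  exact Set.Finite.preimage ((inj_ray c v hv).injOn) (hfin _)

theorem forward (hCH : Cardinal.continuum.{0} = Cardinal.aleph.{0} 1) :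
    ∃ A₀ A₁ A₂ : Set (ℝ × ℝ),
      A₀ ∪ A₁ ∪ A₂ = Set.univ ∧
      (∃ c : ℝ × ℝ, ∀ v : ℝ × ℝ, v ≠ 0 → {t : ℝ | 0 ≤ t ∧ c + t • v ∈ A₀}.Finite) ∧
      (∃ c : ℝ × ℝ, ∀ v : ℝ × ℝ, v ≠ 0 → {t : ℝ | 0 ≤ t ∧ c + t • v ∈ A₁}.Finite) ∧
      (∃ c : ℝ × ℝ, ∀ v : ℝ × ℝ, v ≠ 0 → {t : ℝ | 0 ≤ t ∧ c + t • v ∈ A₂}.Finite) := by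
  obtain ⟨C, hsub, hcov, hfin⟩ := core_out hCH
  refine ⟨C 0 ∪ {p | p.1 = 1} ∪ {p | p.1 + p.2 = 1},
          C 1 ∪ {p | p.1 = 0}, C 2 ∪ {p | p.2 = 0}, ?_, ?_, ?_, ?_⟩
  · -- cover
    ext p
    simp only [Set.mem_union, Set.mem_setOf_eq, Set.mem_univ, iff_true]
    by_cases h1 : p.1 = 0
    · exact Or.inl (Or.inr (Or.inr h1))
    by_cases h2 : p.1 = 1
    · exact Or.inl (Or.inl (Or.inl (Or.inr h2)))
    by_cases h3 : p.2 = 0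
    · exact Or.inr (Or.inr h3)
    by_cases h4 : p.1 + p.2 = 1
    · exact Or.inl (Or.inl (Or.inr h4))
    · obtain ⟨i, hi⟩ := hcov p ⟨h1, h2, h3, h4⟩
      fin_cases i
      · exact Or.inl (Or.inl (Or.inl (Or.inl hi)))
      · exact Or.inl (Or.inr (Or.inl hi))
      · exact Or.inr (Or.inl hi)
  · -- A₀ is a cloud with centre (0,0)
    refine ⟨(0, 0), fun v hv => ?_⟩
    have hC : {t : ℝ | (0, 0) + t • v ∈ C 0}.Finite := by
      by_cases hv1 : v.1 = 0
      · have : {t : ℝ | (0, 0) + t • v ∈ C 0} = ∅ := by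
          ext t
          simp only [Set.mem_setOf_eq, Set.mem_empty_iff_false, iff_false]
          intro h
          have := (hsub 0 h).1
          rw [point_eq] at this
          simp [hv1] at this
        rw [this]; exact Set.finite_empty
      · refine C_piece_finite (C 0) 0 (hsub 0) (hfin 0) (0, 0) v hv (fun t ht => ?_)
        have hR := hsub 0 ht
        rw [point_eq] at ht hR ⊢
        simp only at hR
        have hx : (0 : ℝ) + t * v.1 ≠ 0 := hR.1
        have ht0 : t ≠ 0 := by
          intro h; rw [h] at hx; simp at hx
        rw [zc0]
        simp only
        rw [show (0 : ℝ) + t * v.1 = t * v.1 by ring, show (0 : ℝ) + t * v.2 = t * v.2 by ring]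
        exact mul_div_mul_left _ _ ht0
    have hL1 : {t : ℝ | ((0:ℝ), (0:ℝ)) + t • v ∈ {p : ℝ × ℝ | p.1 = 1}}.Finite := by
      refine Set.Subsingleton.finite (fun t ht t' ht' => ?_)
      simp only [Set.mem_setOf_eq, point_eq] at ht ht'
      exact subsingleton_solutions v.1 (by simpa using ht) (by simpa using ht')
    have hL2 : {t : ℝ | ((0:ℝ), (0:ℝ)) + t • v ∈ {p : ℝ × ℝ | p.1 + p.2 = 1}}.Finite := by
      refine Set.Subsingleton.finite (fun t ht t' ht' => ?_)
      have ht2 : t * v.1 + t * v.2 = 1 := by simpa [point_eq] using ht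
      have ht2' : t' * v.1 + t' * v.2 = 1 := by simpa [point_eq] using ht'
      refine subsingleton_solutions (v.1 + v.2) ?_ ?_
      · show t * (v.1 + v.2) = 1; linear_combination ht2
      · show t' * (v.1 + v.2) = 1; linear_combination ht2'
    refine Set.Finite.subset ((hC.union hL1).union hL2) (fun t ht => ?_)
    rcases ht.2 with (h | h) | h
    · exact Or.inl (Or.inl h)
    · exact Or.inl (Or.inr h)
    · exact Or.inr h
  · -- A₁ is a cloud with centre (1,0)
    refine ⟨(1, 0), fun v hv => ?_⟩
    have hC : {t : ℝ | (1, 0) + t • v ∈ C 1}.Finite := by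
      by_cases hv1 : v.1 = 0
      · have : {t : ℝ | (1, 0) + t • v ∈ C 1} = ∅ := by
          ext t
          simp only [Set.mem_setOf_eq, Set.mem_empty_iff_false, iff_false]
          intro h
          have := (hsub 1 h).2.1
          rw [point_eq] at this
          simp [hv1] at this
        rw [this]; exact Set.finite_empty
      · refine C_piece_finite (C 1) 1 (hsub 1) (hfin 1) (1, 0) v hv (fun t ht => ?_)
        have hR := hsub 1 ht
        rw [point_eq] at ht hR ⊢
        simp only at hR
        have hx : (1 : ℝ) + t * v.1 ≠ 1 := hR.2.1
        have ht0 : t ≠ 0 := by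
          intro h; rw [h] at hx; simp at hx
        rw [zc1]
        simp only
        rw [show (1 : ℝ) + t * v.1 - 1 = t * v.1 by ring, show (0 : ℝ) + t * v.2 = t * v.2 by ring]
        exact mul_div_mul_left _ _ ht0
    have hL1 : {t : ℝ | ((1:ℝ), (0:ℝ)) + t • v ∈ {p : ℝ × ℝ | p.1 = 0}}.Finite := by
      refine Set.Subsingleton.finite (fun t ht t' ht' => ?_)
      have ht2 : 1 + t * v.1 = 0 := by simpa [point_eq] using ht
      have ht2' : 1 + t' * v.1 = 0 := by simpa [point_eq] using ht'
      refine subsingleton_solutions (-v.1) ?_ ?_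
      · show t * (-v.1) = 1; linear_combination -ht2
      · show t' * (-v.1) = 1; linear_combination -ht2'
    refine Set.Finite.subset (hC.union hL1) (fun t ht => ?_)
    rcases ht.2 with h | h
    · exact Or.inl h
    · exact Or.inr h
  · -- A₂ is a cloud with centre (0,1)
    refine ⟨(0, 1), fun v hv => ?_⟩
    have hC : {t : ℝ | (0, 1) + t • v ∈ C 2}.Finite := by
      by_cases hv1 : v.1 = 0
      · have : {t : ℝ | (0, 1) + t • v ∈ C 2} = ∅ := by
          ext t
          simp only [Set.mem_setOf_eq, Set.mem_empty_iff_false, iff_false]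
          intro h
          have := (hsub 2 h).1
          rw [point_eq] at this
          simp [hv1] at this
        rw [this]; exact Set.finite_empty
      · refine C_piece_finite (C 2) 2 (hsub 2) (hfin 2) (0, 1) v hv (fun t ht => ?_)
        have hR := hsub 2 ht
        rw [point_eq] at ht hR ⊢
        simp only at hR
        have hx : (0 : ℝ) + t * v.1 ≠ 0 := hR.1
        have ht0 : t ≠ 0 := by
          intro h; rw [h] at hx; simp at hx
        rw [zc2]
        simp only
        rw [show (1 : ℝ) + t * v.2 - 1 = t * v.2 by ring, show (0 : ℝ) + t * v.1 = t * v.1 by ring]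
        exact mul_div_mul_left _ _ ht0
    have hL1 : {t : ℝ | ((0:ℝ), (1:ℝ)) + t • v ∈ {p : ℝ × ℝ | p.2 = 0}}.Finite := by
      refine Set.Subsingleton.finite (fun t ht t' ht' => ?_)
      have ht2 : 1 + t * v.2 = 0 := by simpa [point_eq] using ht
      have ht2' : 1 + t' * v.2 = 0 := by simpa [point_eq] using ht'
      refine subsingleton_solutions (-v.2) ?_ ?_
      · show t * (-v.2) = 1; linear_combination -ht2
      · show t' * (-v.2) = 1; linear_combination -ht2'
    refine Set.Finite.subset (hC.union hL1) (fun t ht => ?_)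
    rcases ht.2 with h | h
    · exact Or.inl h
    · exact Or.inr h

lemma free_pair (S : Set ℝ) (hS : ¬ S.Countable) (g : ℝ → Set ℝ) (hg : ∀ t, (g t).Finite) :
    ∃ u ∈ S, ∃ v ∈ S, u ≠ v ∧ u ∉ g v ∧ v ∉ g u := by
  have hSinf : S.Infinite := fun hfin => hS hfin.countable
  set e := hSinf.natEmbedding S with he
  set Z : Set ℝ := (Set.range (fun n => (e n : ℝ))) ∪ ⋃ n, g (e n) with hZ
  have hZc : Z.Countable := by
    refine Set.Countable.union (Set.countable_range _) ?_
    exact Set.countable_iUnion (fun n => (hg _).countable)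
  obtain ⟨v, hvS, hvZ⟩ : ∃ v ∈ S, v ∉ Z := by
    by_contra h
    push_neg at h
    exact hS (hZc.mono h)
  have hbad : {n : ℕ | (e n : ℝ) ∈ g v}.Finite := by
    refine Set.Finite.preimage ?_ (hg v)
    intro a _ b _ hab
    exact e.injective (Subtype.ext hab)
  obtain ⟨n, hn⟩ : ∃ n : ℕ, (e n : ℝ) ∉ g v := by
    rcases (hbad.infinite_compl).nonempty with ⟨n, hn⟩
    exact ⟨n, hn⟩
  refine ⟨e n, (e n).2, v, hvS, ?_, hn, ?_⟩
  · intro h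
    exact hvZ (Or.inl ⟨n, h⟩)
  · intro h
    exact hvZ (Or.inr (Set.mem_iUnion.2 ⟨n, h⟩))

lemma closure_exists (F : ℝ → ℝ → Set ℝ) (hF : ∀ p q, (F p q).Finite)
    (hch : Cardinal.aleph.{0} 1 < Cardinal.continuum.{0}) :
    ∃ M : Set ℝ, (∀ p ∈ M, ∀ q ∈ M, F p q ⊆ M) ∧ ¬ M.Countable ∧ ∃ w, w ∉ M := by
  obtain ⟨M₀, hM₀⟩ : ∃ p : Set ℝ, #p = Cardinal.aleph.{0} 1 := by
    refine Cardinal.le_mk_iff_exists_set.mp ?_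
    rw [Cardinal.mk_real]
    exact hch.le
  set CL : ℕ → Set ℝ := fun n => Nat.rec M₀ (fun _ T => T ∪ ⋃ p ∈ T, ⋃ q ∈ T, F p q) n with hCL
  have hCLsucc : ∀ n, CL (n + 1) = CL n ∪ ⋃ p ∈ CL n, ⋃ q ∈ CL n, F p q := fun n => rfl
  have hCLmono : ∀ {n m}, n ≤ m → CL n ⊆ CL m := by
    intro n m h
    induction m with
    | zero => rw [Nat.le_zero.mp h]
    | succ m ih =>
      rcases Nat.lt_or_ge n (m + 1) with h' | h'
      · refine (ih (Nat.lt_succ_iff.mp h')).trans ?_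
        rw [hCLsucc]
        exact Set.subset_union_left
      · rw [le_antisymm h h']
  have hcard : ∀ n, #(CL n) ≤ Cardinal.aleph.{0} 1 := by
    intro n
    induction n with
    | zero => exact le_of_eq hM₀
    | succ n ih =>
      rw [hCLsucc]
      refine le_trans (Cardinal.mk_union_le _ _) ?_
      have hb : #(⋃ p ∈ CL n, ⋃ q ∈ CL n, F p q) ≤ Cardinal.aleph.{0} 1 := by
        refine le_trans (Cardinal.mk_biUnion_le _ _) ?_
        have hsup : ⨆ p : CL n, #(⋃ q ∈ CL n, F p q) ≤ Cardinal.aleph.{0} 1 := by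
          refine ciSup_le' (fun p => ?_)
          refine le_trans (Cardinal.mk_biUnion_le _ _) ?_
          have hsup2 : ⨆ q : CL n, #(F p q) ≤ Cardinal.aleph.{0} 1 := by
            refine ciSup_le' (fun q => ?_)
            haveI := ((hF p q).countable).to_subtype
            exact le_trans Cardinal.mk_le_aleph0 (Cardinal.aleph0_le_aleph 1)
          refine le_trans (mul_le_mul' ih hsup2) ?_
          rw [Cardinal.mul_eq_self (Cardinal.aleph0_le_aleph 1)]
        refine le_trans (mul_le_mul' ih hsup) ?_
        rw [Cardinal.mul_eq_self (Cardinal.aleph0_le_aleph 1)]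
      refine le_trans (add_le_add ih hb) ?_
      rw [Cardinal.add_eq_self (Cardinal.aleph0_le_aleph 1)]
  set M : Set ℝ := ⋃ n, CL n with hM
  have hMcard : #M ≤ Cardinal.aleph.{0} 1 := by
    refine le_trans (Cardinal.mk_iUnion_le _) ?_
    have : ⨆ n, #(CL n) ≤ Cardinal.aleph.{0} 1 := ciSup_le' hcard
    refine le_trans (mul_le_mul' (le_of_eq Cardinal.mk_nat) this) ?_
    exact le_trans (mul_le_mul' (Cardinal.aleph0_le_aleph 1) le_rfl)
      (le_of_eq (Cardinal.mul_eq_self (Cardinal.aleph0_le_aleph 1)))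
  refine ⟨M, ?_, ?_, ?_⟩
  · intro p hp q hq
    rcases Set.mem_iUnion.1 hp with ⟨n, hn⟩
    rcases Set.mem_iUnion.1 hq with ⟨m, hm⟩
    intro x hx
    refine Set.mem_iUnion.2 ⟨max n m + 1, ?_⟩
    rw [hCLsucc]
    refine Or.inr ?_
    refine Set.mem_biUnion (hCLmono (le_max_left n m) hn) ?_
    exact Set.mem_biUnion (hCLmono (le_max_right n m) hm) hx
  · intro hc
    have : #M ≤ ℵ₀ := Cardinal.mk_le_aleph0_iff.2 (Set.countable_coe_iff.2 hc)
    have hM₀M : M₀ ⊆ M := fun x hx => Set.mem_iUnion.2 ⟨0, hx⟩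
    have : Cardinal.aleph.{0} 1 ≤ ℵ₀ := by
      calc Cardinal.aleph.{0} 1 = #M₀ := hM₀.symm
        _ ≤ #M := Cardinal.mk_le_mk_of_subset hM₀M
        _ ≤ ℵ₀ := this
    exact absurd this (not_le.2 Cardinal.aleph0_lt_aleph_one)
  · by_contra h
    push_neg at h
    have : (Set.univ : Set ℝ) ⊆ M := fun x _ => h x
    have hle : Cardinal.continuum.{0} ≤ Cardinal.aleph.{0} 1 := by
      calc Cardinal.continuum.{0} = #(ℝ) := Cardinal.mk_real.symm
        _ = #(Set.univ : Set ℝ) := Cardinal.mk_univ.symm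
        _ ≤ #M := Cardinal.mk_le_mk_of_subset this
        _ ≤ Cardinal.aleph.{0} 1 := hMcard
    exact absurd hle (not_le.2 hch)

def Dd (a b : ℝ) : ℝ := 1 + Real.exp a - Real.exp (a + b)
def Pt (a b : ℝ) : ℝ × ℝ := (1 / Dd a b, Real.exp a / Dd a b)

lemma Dd_inj {a b b' : ℝ} (h : Dd a b = Dd a b') : b = b' := by
  rw [Dd, Dd] at h
  have := Real.exp_injective (by linarith : Real.exp (a + b) = Real.exp (a + b'))
  linarith [this]

lemma Dd_inj' {a a' b : ℝ} (hb : b ≠ 0) (h : Dd a b = Dd a' b) : a = a' := by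
  rw [Dd, Dd, Real.exp_add, Real.exp_add] at h
  have hfac : Real.exp a * (1 - Real.exp b) = Real.exp a' * (1 - Real.exp b) := by ring_nf; ring_nf at h; linarith
  have hbne : 1 - Real.exp b ≠ 0 := by
    intro h0
    exact hb (Real.exp_injective (by rw [Real.exp_zero]; linarith))
  exact Real.exp_injective (mul_right_cancel₀ hbne hfac)

lemma H0_finite (B : Set (ℝ × ℝ))
    (hB : ∀ v : ℝ × ℝ, v ≠ 0 → {t : ℝ | ((0:ℝ), (0:ℝ)) + t • v ∈ B}.Finite) (a : ℝ) :
    {b : ℝ | Dd a b ≠ 0 ∧ Pt a b ∈ B}.Finite := by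
  have hv : ((1:ℝ), Real.exp a) ≠ (0 : ℝ × ℝ) := by
    intro h
    have := congrArg Prod.fst h
    norm_num at this
  have hfin := hB _ hv
  refine Set.Finite.of_finite_image (f := fun b => 1 / Dd a b) (hfin.subset ?_) ?_
  · rintro t ⟨b, ⟨hD, hPt⟩, rfl⟩
    simp only [Set.mem_setOf_eq, point_eq]
    have : ((0:ℝ) + 1 / Dd a b * 1, (0:ℝ) + 1 / Dd a b * Real.exp a) = Pt a b := by
      rw [Pt]
      ext <;> simp <;> ring
    rw [this]
    exact hPt
  · rintro b ⟨hD, _⟩ b' ⟨hD', _⟩ h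
    simp only at h
    have : Dd a b = Dd a b' := by
      field_simp at h
      linarith [h]
    exact Dd_inj this

lemma H2_finite (B : Set (ℝ × ℝ))
    (hB : ∀ v : ℝ × ℝ, v ≠ 0 → {t : ℝ | ((0:ℝ), (1:ℝ)) + t • v ∈ B}.Finite) (c : ℝ) :
    {a : ℝ | Dd a (c - a) ≠ 0 ∧ Pt a (c - a) ∈ B}.Finite := by
  have hv : ((1:ℝ), Real.exp c - 1) ≠ (0 : ℝ × ℝ) := by
    intro h
    have := congrArg Prod.fst h
    norm_num at this
  have hfin := hB _ hv
  have hDc : ∀ a : ℝ, Dd a (c - a) = 1 + Real.exp a - Real.exp c := by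
    intro a
    rw [Dd, show a + (c - a) = c by ring]
  refine Set.Finite.of_finite_image (f := fun a => 1 / Dd a (c - a)) (hfin.subset ?_) ?_
  · rintro t ⟨a, ⟨hD, hPt⟩, rfl⟩
    simp only [Set.mem_setOf_eq, point_eq]
    have : ((0:ℝ) + 1 / Dd a (c - a) * 1, (1:ℝ) + 1 / Dd a (c - a) * (Real.exp c - 1)) =
        Pt a (c - a) := by
      rw [Pt]
      refine Prod.ext (by simp) ?_
      simp only
      rw [hDc] at hD ⊢
      field_simp
      ring
    rw [this]
    exact hPt
  · rintro a ⟨hD, _⟩ a' ⟨hD', _⟩ h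
    simp only at h
    have hDD : Dd a (c - a) = Dd a' (c - a') := by
      field_simp at h
      linarith [h]
    rw [hDc, hDc] at hDD
    exact Real.exp_injective (by linarith)

lemma H1_finite (B : Set (ℝ × ℝ))
    (hB : ∀ v : ℝ × ℝ, v ≠ 0 → {t : ℝ | ((1:ℝ), (0:ℝ)) + t • v ∈ B}.Finite) (b : ℝ) :
    {a : ℝ | b ≠ 0 ∧ Dd a b ≠ 0 ∧ Pt a b ∈ B}.Finite := by
  by_cases hb : b = 0
  · have : {a : ℝ | b ≠ 0 ∧ Dd a b ≠ 0 ∧ Pt a b ∈ B} = ∅ := by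
      ext a; simp [hb]
    rw [this]; exact Set.finite_empty
  · have hexp : Real.exp b - 1 ≠ 0 := by
      intro h0
      exact hb (Real.exp_injective (by rw [Real.exp_zero]; linarith))
    have hv : ((1:ℝ), 1 / (Real.exp b - 1)) ≠ (0 : ℝ × ℝ) := by
      intro h
      have := congrArg Prod.fst h
      norm_num at this
    have hfin := hB _ hv
    refine Set.Finite.of_finite_image
      (f := fun a => Real.exp a * (Real.exp b - 1) / Dd a b) (hfin.subset ?_) ?_
    · rintro t ⟨a, ⟨_, hD, hPt⟩, rfl⟩
      simp only [Set.mem_setOf_eq, point_eq]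
      have : ((1:ℝ) + Real.exp a * (Real.exp b - 1) / Dd a b * 1,
          (0:ℝ) + Real.exp a * (Real.exp b - 1) / Dd a b * (1 / (Real.exp b - 1))) = Pt a b := by
        rw [Pt]
        have hDd : Dd a b = 1 + Real.exp a - Real.exp a * Real.exp b := by
          rw [Dd, Real.exp_add]
        refine Prod.ext ?_ ?_
        · simp only
          rw [hDd] at hD ⊢
          field_simp
          ring
        · simp only
          rw [hDd] at hD ⊢
          field_simp
          ring
      rw [this]
      exact hPt
    · rintro a ⟨_, hD, hPt⟩ a' ⟨_, hD', hPt'⟩ h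
      simp only at h
      -- from equal parameters, the resulting points are equal, hence first coords equal
      have hpt : ((1:ℝ), (0:ℝ)) + (Real.exp a * (Real.exp b - 1) / Dd a b) •
          ((1:ℝ), 1 / (Real.exp b - 1)) = ((1:ℝ), (0:ℝ)) +
          (Real.exp a' * (Real.exp b - 1) / Dd a' b) • ((1:ℝ), 1 / (Real.exp b - 1)) := by
        rw [h]
      -- use the same computation as above to show these equal Pt a b and Pt a' b
      have hcomp : ∀ x : ℝ, Dd x b ≠ 0 → ((1:ℝ), (0:ℝ)) +
          (Real.exp x * (Real.exp b - 1) / Dd x b) • ((1:ℝ), 1 / (Real.exp b - 1)) = Pt x b := by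
        intro x hDx
        rw [point_eq, Pt]
        have hDd : Dd x b = 1 + Real.exp x - Real.exp x * Real.exp b := by
          rw [Dd, Real.exp_add]
        refine Prod.ext ?_ ?_
        · simp only
          rw [hDd] at hDx ⊢
          field_simp
          ring
        · simp only
          rw [hDd] at hDx ⊢
          field_simp
          ring
      rw [hcomp a hD, hcomp a' hD'] at hpt
      have hfst : 1 / Dd a b = 1 / Dd a' b := congrArg Prod.fst hpt
      have hDD : Dd a b = Dd a' b := by
        field_simp at hfst
        linarith [hfst]
      exact Dd_inj' hb hDD

/-- the set mapping -/
def Fse (H0 H1 H2 : ℝ → Set ℝ) (p q : ℝ) : Set ℝ :=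
  (fun x => q + x) '' H0 (p + q) ∪ (fun x => p + x) '' H0 (p + q) ∪
  (fun x => x - q) '' H1 (p - q) ∪ (fun x => x - p) '' H1 (q - p) ∪
  (fun x => x - p) '' H2 (p + q) ∪ (fun x => x - q) '' H2 (p + q) ∪
  {r | Real.exp (p + r) = Real.exp (p + q) - 1} ∪
  {r | Real.exp (q + r) = Real.exp (p + q) - 1}

lemma Fse_finite (H0 H1 H2 : ℝ → Set ℝ) (h0 : ∀ a, (H0 a).Finite) (h1 : ∀ a, (H1 a).Finite)
    (h2 : ∀ a, (H2 a).Finite) (p q : ℝ) : (Fse H0 H1 H2 p q).Finite := by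
  have hexp : ∀ s c : ℝ, {r : ℝ | Real.exp (s + r) = c}.Finite := by
    intro s c
    refine Set.Subsingleton.finite (fun r hr r' hr' => ?_)
    have : Real.exp (s + r) = Real.exp (s + r') := by
      rw [Set.mem_setOf_eq] at hr hr'
      rw [hr, hr']
    have := Real.exp_injective this
    linarith [this]
  exact ((((((((h0 _).image _).union ((h0 _).image _)).union ((h1 _).image _)).union
    ((h1 _).image _)).union ((h2 _).image _)).union ((h2 _).image _)).union (hexp _ _)).union
    (hexp _ _)

lemma collinear_dir (c0 c1 c2 : ℝ × ℝ)
    (h : (c1 - c0).1 * (c2 - c0).2 - (c1 - c0).2 * (c2 - c0).1 = 0) :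
    ∃ d : ℝ × ℝ, d ≠ 0 ∧ ∃ t1 t2 : ℝ, c1 = c0 + t1 • d ∧ c2 = c0 + t2 • d := by
  by_cases hp : c1 - c0 = 0
  · have hc1 : c1 = c0 := sub_eq_zero.mp hp
    by_cases hq : c2 - c0 = 0
    · have hc2 : c2 = c0 := sub_eq_zero.mp hq
      exact ⟨(1, 0), by simp [Prod.ext_iff], 0, 0, by simp [hc1], by simp [hc2]⟩
    · exact ⟨c2 - c0, hq, 0, 1, by simp [hc1], by simp⟩
  · refine ⟨c1 - c0, hp, 1, ?_, by simp, ?_⟩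
    · exact if (c1 - c0).1 = 0 then (c2 - c0).2 / (c1 - c0).2 else (c2 - c0).1 / (c1 - c0).1
    · by_cases hp1 : (c1 - c0).1 = 0
      · have hp2 : (c1 - c0).2 ≠ 0 := by
          intro hp2
          exact hp (Prod.ext hp1 hp2)
        have hq1 : (c2 - c0).1 = 0 := by
          rw [hp1] at h
          have := mul_left_cancel₀ hp2 (by linarith : (c1 - c0).2 * (c2 - c0).1 = (c1 - c0).2 * 0)
          simpa using this
        rw [if_pos hp1]
        have : ((c2 - c0).2 / (c1 - c0).2) • (c1 - c0) =
            (((c2 - c0).2 / (c1 - c0).2) * (c1 - c0).1, ((c2 - c0).2 / (c1 - c0).2) * (c1 - c0).2) := by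
          ext <;> simp
        rw [this]
        have hcomp : (((c2 - c0).2 / (c1 - c0).2) * (c1 - c0).1, ((c2 - c0).2 / (c1 - c0).2) * (c1 - c0).2) = c2 - c0 := by
          refine Prod.ext ?_ ?_
          · simp only
            rw [hp1, hq1]
            ring
          · simp only
            field_simp
        rw [hcomp]
        simp
      · rw [if_neg hp1]
        have heq : ((c2 - c0).1 / (c1 - c0).1) • (c1 - c0) = c2 - c0 := by
          have : ((c2 - c0).1 / (c1 - c0).1) • (c1 - c0) =
              (((c2 - c0).1 / (c1 - c0).1) * (c1 - c0).1, ((c2 - c0).1 / (c1 - c0).1) * (c1 - c0).2) := by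
            ext <;> simp
          rw [this]
          refine Prod.ext ?_ ?_
          · simp only
            field_simp
          · simp only
            rw [div_mul_eq_mul_div, div_eq_iff hp1]
            linear_combination -h
        rw [heq]
        simp

theorem converse (A₀ A₁ A₂ : Set (ℝ × ℝ)) (hcov : A₀ ∪ A₁ ∪ A₂ = Set.univ)
    (h₀ : ∃ c : ℝ × ℝ, ∀ v : ℝ × ℝ, v ≠ 0 → {t : ℝ | 0 ≤ t ∧ c + t • v ∈ A₀}.Finite)
    (h₁ : ∃ c : ℝ × ℝ, ∀ v : ℝ × ℝ, v ≠ 0 → {t : ℝ | 0 ≤ t ∧ c + t • v ∈ A₁}.Finite)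
    (h₂ : ∃ c : ℝ × ℝ, ∀ v : ℝ × ℝ, v ≠ 0 → {t : ℝ | 0 ≤ t ∧ c + t • v ∈ A₂}.Finite) :
    Cardinal.continuum.{0} = Cardinal.aleph.{0} 1 := by
  obtain ⟨c0, hc0⟩ := h₀
  obtain ⟨c1, hc1⟩ := h₁
  obtain ⟨c2, hc2⟩ := h₂
  have hl0 : ∀ v : ℝ × ℝ, v ≠ 0 → {t : ℝ | c0 + t • v ∈ A₀}.Finite := fun v hv => line_finite hc0 hv
  have hl1 : ∀ v : ℝ × ℝ, v ≠ 0 → {t : ℝ | c1 + t • v ∈ A₁}.Finite := fun v hv => line_finite hc1 hv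
  have hl2 : ∀ v : ℝ × ℝ, v ≠ 0 → {t : ℝ | c2 + t • v ∈ A₂}.Finite := fun v hv => line_finite hc2 hv
  have hmem : ∀ z : ℝ × ℝ, z ∈ A₀ ∨ z ∈ A₁ ∨ z ∈ A₂ := by
    intro z
    have : z ∈ A₀ ∪ A₁ ∪ A₂ := by rw [hcov]; exact Set.mem_univ z
    rcases this with (h | h) | h
    · exact Or.inl h
    · exact Or.inr (Or.inl h)
    · exact Or.inr (Or.inr h)
  by_cases hdet : (c1 - c0).1 * (c2 - c0).2 - (c1 - c0).2 * (c2 - c0).1 = 0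
  · -- degenerate case: outright contradiction
    exfalso
    obtain ⟨d, hd, t1, t2, hc1e, hc2e⟩ := collinear_dir c0 c1 c2 hdet
    have shift : ∀ (A : Set (ℝ × ℝ)) (c : ℝ × ℝ) (s0 : ℝ), c = c0 + s0 • d →
        (∀ v : ℝ × ℝ, v ≠ 0 → {t : ℝ | c + t • v ∈ A}.Finite) →
        {t : ℝ | c0 + t • d ∈ A}.Finite := by
      intro A c s0 hce hlf
      have heq : {t : ℝ | c0 + t • d ∈ A} = (fun s => s0 + s) '' {s : ℝ | c + s • d ∈ A} := by
        ext t
        simp only [Set.mem_setOf_eq, Set.mem_image]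
        constructor
        · intro h
          refine ⟨t - s0, ?_, by ring⟩
          rw [hce, add_assoc, ← add_smul]
          rw [show s0 + (t - s0) = t by ring]
          exact h
        · rintro ⟨s, hs, rfl⟩
          rw [hce, add_assoc, ← add_smul] at hs
          exact hs
      rw [heq]
      exact (hlf d hd).image _
    have f0 : {t : ℝ | c0 + t • d ∈ A₀}.Finite := hl0 d hd
    have f1 : {t : ℝ | c0 + t • d ∈ A₁}.Finite := shift A₁ c1 t1 hc1e hl1
    have f2 : {t : ℝ | c0 + t • d ∈ A₂}.Finite := shift A₂ c2 t2 hc2e hl2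
    have hsub : (Set.univ : Set ℝ) ⊆
        {t : ℝ | c0 + t • d ∈ A₀} ∪ {t : ℝ | c0 + t • d ∈ A₁} ∪ {t : ℝ | c0 + t • d ∈ A₂} := by
      intro t _
      rcases hmem (c0 + t • d) with h | h | h
      · exact Or.inl (Or.inl h)
      · exact Or.inl (Or.inr h)
      · exact Or.inr h
    exact Set.infinite_univ (Set.Finite.subset ((f0.union f1).union f2) hsub)
  · -- nondegenerate case
    have hge : Cardinal.aleph.{0} 1 ≤ Cardinal.continuum.{0} := Cardinal.aleph_one_le_continuum
    refine le_antisymm ?_ hge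
    by_contra hnle
    have hch : Cardinal.aleph.{0} 1 < Cardinal.continuum.{0} := lt_of_le_of_ne hge (by
      intro h
      exact hnle (le_of_eq h.symm))
    -- set up the affine coordinates
    set T : ℝ × ℝ → ℝ × ℝ := fun z =>
      (c0.1 + z.1 * (c1 - c0).1 + z.2 * (c2 - c0).1,
       c0.2 + z.1 * (c1 - c0).2 + z.2 * (c2 - c0).2) with hTdef
    set L : ℝ × ℝ → ℝ × ℝ := fun v =>
      (v.1 * (c1 - c0).1 + v.2 * (c2 - c0).1, v.1 * (c1 - c0).2 + v.2 * (c2 - c0).2) with hLdef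
    have hL : ∀ v : ℝ × ℝ, v ≠ 0 → L v ≠ 0 := by
      intro v hv hLv
      have h1 : v.1 * (c1 - c0).1 + v.2 * (c2 - c0).1 = 0 := congrArg Prod.fst hLv
      have h2 : v.1 * (c1 - c0).2 + v.2 * (c2 - c0).2 = 0 := congrArg Prod.snd hLv
      have hv1 : v.1 * ((c1 - c0).1 * (c2 - c0).2 - (c1 - c0).2 * (c2 - c0).1) = 0 := by
        linear_combination (c2 - c0).2 * h1 - (c2 - c0).1 * h2
      have hv2 : v.2 * ((c1 - c0).1 * (c2 - c0).2 - (c1 - c0).2 * (c2 - c0).1) = 0 := by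
        linear_combination (c1 - c0).1 * h2 - (c1 - c0).2 * h1
      have hv1' : v.1 = 0 := by
        rcases mul_eq_zero.mp hv1 with h | h
        · exact h
        · exact absurd h hdet
      have hv2' : v.2 = 0 := by
        rcases mul_eq_zero.mp hv2 with h | h
        · exact h
        · exact absurd h hdet
      exact hv (Prod.ext hv1' hv2')
    have hT0 : T (0, 0) = c0 := by
      rw [hTdef]
      refine Prod.ext ?_ ?_ <;> simp
    have hT1 : T (1, 0) = c1 := by
      rw [hTdef]
      refine Prod.ext ?_ ?_ <;> simp
    have hT2 : T (0, 1) = c2 := by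
      rw [hTdef]
      refine Prod.ext ?_ ?_ <;> simp
    have hTray : ∀ (z v : ℝ × ℝ) (t : ℝ), T (z + t • v) = T z + t • L v := by
      intro z v t
      rw [hTdef, hLdef]
      rw [point_eq z v t, point_eq]
      refine Prod.ext ?_ ?_ <;> (simp only; ring)
    set B0 : Set (ℝ × ℝ) := T ⁻¹' A₀ with hB0def
    set B1 : Set (ℝ × ℝ) := T ⁻¹' A₁ with hB1def
    set B2 : Set (ℝ × ℝ) := T ⁻¹' A₂ with hB2def
    have hB0 : ∀ v : ℝ × ℝ, v ≠ 0 → {t : ℝ | ((0:ℝ), (0:ℝ)) + t • v ∈ B0}.Finite := by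
      intro v hv
      have heq : {t : ℝ | ((0:ℝ), (0:ℝ)) + t • v ∈ B0} = {t : ℝ | c0 + t • L v ∈ A₀} := by
        ext t
        simp only [Set.mem_setOf_eq, hB0def, Set.mem_preimage]
        rw [show ((0:ℝ), (0:ℝ)) = ((0,0) : ℝ × ℝ) from rfl, hTray (0, 0) v t, hT0]
      rw [heq]
      exact hl0 _ (hL v hv)
    have hB1 : ∀ v : ℝ × ℝ, v ≠ 0 → {t : ℝ | ((1:ℝ), (0:ℝ)) + t • v ∈ B1}.Finite := by
      intro v hv
      have heq : {t : ℝ | ((1:ℝ), (0:ℝ)) + t • v ∈ B1} = {t : ℝ | c1 + t • L v ∈ A₁} := by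
        ext t
        simp only [Set.mem_setOf_eq, hB1def, Set.mem_preimage]
        rw [show ((1:ℝ), (0:ℝ)) = ((1,0) : ℝ × ℝ) from rfl, hTray (1, 0) v t, hT1]
      rw [heq]
      exact hl1 _ (hL v hv)
    have hB2 : ∀ v : ℝ × ℝ, v ≠ 0 → {t : ℝ | ((0:ℝ), (1:ℝ)) + t • v ∈ B2}.Finite := by
      intro v hv
      have heq : {t : ℝ | ((0:ℝ), (1:ℝ)) + t • v ∈ B2} = {t : ℝ | c2 + t • L v ∈ A₂} := by
        ext t
        simp only [Set.mem_setOf_eq, hB2def, Set.mem_preimage]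
        rw [show ((0:ℝ), (1:ℝ)) = ((0,1) : ℝ × ℝ) from rfl, hTray (0, 1) v t, hT2]
      rw [heq]
      exact hl2 _ (hL v hv)
    have hBcov : ∀ z : ℝ × ℝ, z ∈ B0 ∨ z ∈ B1 ∨ z ∈ B2 := fun z => hmem (T z)
    -- the set mapping
    set FF : ℝ → ℝ → Set ℝ := Fse (fun a => {b | Dd a b ≠ 0 ∧ Pt a b ∈ B0})
      (fun b => {a | b ≠ 0 ∧ Dd a b ≠ 0 ∧ Pt a b ∈ B1})
      (fun c => {a | Dd a (c - a) ≠ 0 ∧ Pt a (c - a) ∈ B2}) with hFFdef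
    have hFfin : ∀ p q, (FF p q).Finite := by
      intro p q
      rw [hFFdef]
      exact Fse_finite _ _ _ (H0_finite B0 hB0) (H1_finite B1 hB1) (H2_finite B2 hB2) p q
    obtain ⟨M, hMcl, hMunc, w, hwM⟩ := closure_exists FF hFfin hch
    obtain ⟨u, huM, v, hvM, huv, hunot, hvnot⟩ :=
      free_pair M hMunc (fun t => FF t w ∪ FF w t) (fun t => (hFfin t w).union (hFfin w t))
    have hvw : v ≠ w := fun h => hwM (h ▸ hvM)
    have hwFuv : w ∉ FF u v := fun h => hwM (hMcl u huM v hvM h)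
    have hbne : v - w ≠ 0 := sub_ne_zero.2 hvw
    have hD : Dd (u + w) (v - w) ≠ 0 := by
      intro hD0
      apply hwFuv
      rw [hFFdef]
      refine Or.inl (Or.inr ?_)
      show Real.exp (u + w) = Real.exp (u + v) - 1
      rw [Dd] at hD0
      rw [show u + w + (v - w) = u + v by ring] at hD0
      linarith
    rcases hBcov (Pt (u + w) (v - w)) with hBm | hBm | hBm
    · apply hvnot
      refine Or.inl ?_
      rw [hFFdef]
      refine Or.inl (Or.inl (Or.inl (Or.inl (Or.inl (Or.inl (Or.inl ?_))))))
      exact ⟨v - w, ⟨hD, hBm⟩, by ring⟩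
    · apply hunot
      refine Or.inl ?_
      rw [hFFdef]
      refine Or.inl (Or.inl (Or.inl (Or.inl (Or.inl (Or.inr ?_)))))
      exact ⟨u + w, ⟨hbne, hD, hBm⟩, by ring⟩
    · apply hwFuv
      rw [hFFdef]
      refine Or.inl (Or.inl (Or.inl (Or.inr ?_)))
      refine ⟨u + w, ⟨?_, ?_⟩, by ring⟩
      · rw [show u + v - (u + w) = v - w by ring]
        exact hD
      · rw [show u + v - (u + w) = v - w by ring]
        exact hBm

lemma CH_down (h : Cardinal.continuum = Cardinal.aleph 1) :
    Cardinal.continuum.{0} = Cardinal.aleph.{0} 1 := by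
  apply Cardinal.lift_injective
  rw [Cardinal.lift_continuum, Cardinal.lift_aleph]
  simpa using h

lemma CH_up (h : Cardinal.continuum.{0} = Cardinal.aleph.{0} 1) :
    Cardinal.continuum = Cardinal.aleph 1 := by
  have h2 := congrArg Cardinal.lift h
  rw [Cardinal.lift_continuum, Cardinal.lift_aleph] at h2
  rw [h2]
  norm_num

end CloudsKomjath
end

/-- Komjath: CH holds iff the plane can be covered by three clouds. -/
theorem CH_iff_three_clouds :
    Cardinal.continuum = Cardinal.aleph 1 ↔
      ∃ A₀ A₁ A₂ : Set (ℝ × ℝ),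
        A₀ ∪ A₁ ∪ A₂ = Set.univ ∧ IsCloud A₀ ∧ IsCloud A₁ ∧ IsCloud A₂ := by
  constructor
  · intro h
    obtain ⟨A₀, A₁, A₂, hcov, h0, h1, h2⟩ := CloudsKomjath.forward (CloudsKomjath.CH_down h)
    exact ⟨A₀, A₁, A₂, hcov, h0, h1, h2⟩
  · rintro ⟨A₀, A₁, A₂, hcov, h0, h1, h2⟩
    exact CloudsKomjath.CH_up (CloudsKomjath.converse A₀ A₁ A₂ hcov h0 h1 h2)
end

section
/- The Continuum Hypothesis holds if and only if there exists a surjection f : ℝ → ℝ × ℝ, f(x) = (f₁(x), f₂(x)), such that for every x ∈ ℝ, at least one of the derivatives f₁'(x), f₂'(x) exists (i.e., f₁ is differentiable at x or f₂ is differentiable at x). -/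
open Real Set Cardinal MeasureTheory Filter Topology

noncomputable def hh : ℝ → ℝ := fun x => x * Real.sin x

lemma hh_diff : Differentiable ℝ hh := differentiable_id.mul Real.differentiable_sin

lemma hh_even (x : ℝ) : hh (-x) = hh x := by
  simp [hh, Real.sin_neg]

lemma hh_key (a N : ℝ) : ∃ x, N ≤ x ∧ hh x = a := by
  set n : ℕ := ⌈max N |a|⌉₊ with hn
  have hmax : max N |a| ≤ n := Nat.le_ceil _
  set l : ℝ := π/2 + n * (2*π) with hl
  set r : ℝ := π/2 + π + n * (2*π) with hr
  have hnl : (n:ℝ) ≤ l := by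
    have : (n:ℝ) * 1 ≤ (n:ℝ) * (2*π) := by
      apply mul_le_mul_of_nonneg_left _ (Nat.cast_nonneg n)
      nlinarith [Real.pi_gt_three]
    calc (n:ℝ) = (n:ℝ)*1 := (mul_one _).symm
      _ ≤ (n:ℝ)*(2*π) := this
      _ ≤ π/2 + (n:ℝ)*(2*π) := by nlinarith [Real.pi_gt_three]
  have hNl : N ≤ l := le_trans (le_trans (le_max_left _ _) hmax) hnl
  have hal : |a| ≤ l := le_trans (le_trans (le_max_right _ _) hmax) hnl
  have hlr : l ≤ r := by rw [hl, hr]; nlinarith [Real.pi_gt_three]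
  have hhl : hh l = l := by
    rw [hl, hh]
    rw [show π/2 + (n:ℝ) * (2*π) = π/2 + (n:ℝ) * (2*π) from rfl]
    rw [Real.sin_add_nat_mul_two_pi, Real.sin_pi_div_two, mul_one]
  have hhr : hh r = -r := by
    rw [hr, hh, Real.sin_add_nat_mul_two_pi, Real.sin_add_pi, Real.sin_pi_div_two]
    ring
  have hmem : a ∈ Icc (hh r) (hh l) := by
    rw [hhl, hhr]
    constructor
    · have := abs_le.mp (le_refl |a|)
      have h1 : -l ≤ a := by have := neg_abs_le a; linarith
      have : -r ≤ -l := by linarith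
      linarith [neg_abs_le a]
    · linarith [le_abs_self a]
  have := intermediate_value_Icc' hlr (hh_diff.continuous.continuousOn) hmem
  obtain ⟨x, hx, hxa⟩ := this
  exact ⟨x, le_trans hNl hx.1, hxa⟩




lemma W_inf (a : ℝ) : {x : ℝ | 1 ≤ x ∧ hh x = a}.Infinite := by
  by_contra hfin
  rw [Set.not_infinite] at hfin
  obtain ⟨B, hB⟩ := hfin.bddAbove
  obtain ⟨x, hx1, hx2⟩ := hh_key a (max B 1 + 1)
  have h1 : (1:ℝ) ≤ x := by linarith [le_max_right B 1]
  have := hB (⟨h1, hx2⟩ : x ∈ {x : ℝ | 1 ≤ x ∧ hh x = a})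
  linarith [le_max_left B 1]

lemma V_inf (c : ℝ) : {x : ℝ | x ≤ -1 ∧ hh x = c}.Infinite := by
  have : (fun x : ℝ => -x) '' {x : ℝ | 1 ≤ x ∧ hh x = c} ⊆ {x : ℝ | x ≤ -1 ∧ hh x = c} := by
    rintro y ⟨x, ⟨hx1, hx2⟩, rfl⟩
    exact ⟨by simp only []; linarith, by rw [hh_even]; exact hx2⟩
  exact Set.Infinite.mono this ((W_inf c).image (neg_injective.injOn))

lemma ch_wo (hCH : (Cardinal.continuum : Cardinal.{0}) = Cardinal.aleph 1) :
    ∃ e : ℝ ≃ (Cardinal.aleph 1 : Cardinal.{0}).ord.ToType,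
      ∀ a : ℝ, {c : ℝ | e c ≤ e a}.Countable := by
  have h1 : #((Cardinal.aleph 1 : Cardinal.{0}).ord.ToType) = Cardinal.aleph 1 := by
    rw [Cardinal.mk_toType, Cardinal.card_ord]
  have h2 : #ℝ = #((Cardinal.aleph 1 : Cardinal.{0}).ord.ToType) := by
    rw [Cardinal.mk_real, h1, hCH]
  obtain ⟨e⟩ := Cardinal.eq.mp h2
  refine ⟨e, fun a => ?_⟩
  have hIio : (Set.Iio (e a)).Countable :=
    (Cardinal.countable_iff_lt_aleph_one _).mpr (Cardinal.mk_Iio_ord_toType (e a))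
  have hIic : (Set.Iic (e a)).Countable := by
    rw [← Set.Iio_insert]; exact hIio.insert _
  exact hIic.preimage e.injective




lemma forward (hCH : (Cardinal.continuum : Cardinal.{0}) = Cardinal.aleph 1) :
    ∃ f : ℝ → ℝ × ℝ, Function.Surjective f ∧
      ∀ x : ℝ, DifferentiableAt ℝ (fun t => (f t).1) x ∨
        DifferentiableAt ℝ (fun t => (f t).2) x := by
  classical
  obtain ⟨e, hcnt⟩ := ch_wo hCH
  -- enumerations of fibers
  set W : ℝ → Set ℝ := fun a => {x : ℝ | 1 ≤ x ∧ hh x = a} with hW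
  set V : ℝ → Set ℝ := fun c => {x : ℝ | x ≤ -1 ∧ hh x = c} with hV
  let ι : ∀ a : ℝ, ℕ ↪ ↥(W a) := fun a => (W_inf a).natEmbedding
  let κ : ∀ c : ℝ, ℕ ↪ ↥(V c) := fun c => (V_inf c).natEmbedding
  -- countable surjections onto initial segments
  have hσ : ∀ a : ℝ, ∃ σ : ℕ → ℝ, {c : ℝ | e c ≤ e a} = Set.range σ := fun a =>
    (hcnt a).exists_eq_range ⟨a, show e a ≤ e a from le_refl _⟩
  choose σ hσ using hσ
  -- the wild parts
  let G : ℝ → ℝ → ℝ := fun b x =>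
    if hx : ∃ n, ((ι b n : ℝ) = x) then σ b (Classical.choose hx) else 0
  let G' : ℝ → ℝ → ℝ := fun b x =>
    if hx : ∃ n, ((κ b n : ℝ) = x) then σ b (Classical.choose hx) else 0
  have hG : ∀ a n, G a ((ι a n : ℝ)) = σ a n := by
    intro a n
    have hex : ∃ m, ((ι a m : ℝ) = (ι a n : ℝ)) := ⟨n, rfl⟩
    have : Classical.choose hex = n := by
      have := Classical.choose_spec hex
      exact (ι a).injective (Subtype.coe_injective this)
    simp only [G, dif_pos hex, this]
  have hG' : ∀ c n, G' c ((κ c n : ℝ)) = σ c n := by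
    intro c n
    have hex : ∃ m, ((κ c m : ℝ) = (κ c n : ℝ)) := ⟨n, rfl⟩
    have : Classical.choose hex = n := by
      have := Classical.choose_spec hex
      exact (κ c).injective (Subtype.coe_injective this)
    simp only [G', dif_pos hex, this]
  refine ⟨fun x => (if x ≤ -1 then G' (hh x) x else hh x,
                    if 1 ≤ x then G (hh x) x else hh x), ?_, ?_⟩
  · rintro ⟨a, c⟩
    rcases le_total (e c) (e a) with hca | hac
    · -- witness on the right
      have : c ∈ Set.range (σ a) := by rw [← hσ a]; exact hca
      obtain ⟨n, hn⟩ := this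
      refine ⟨((ι a n : ℝ)), ?_⟩
      obtain ⟨hx1, hx2⟩ := (ι a n).2
      have hnl : ¬ ((ι a n : ℝ) ≤ -1) := by push_neg; linarith
      simp only [if_neg hnl, if_pos hx1]
      rw [hx2, hG a n, hn]
    · have : a ∈ Set.range (σ c) := by rw [← hσ c]; exact hac
      obtain ⟨n, hn⟩ := this
      refine ⟨((κ c n : ℝ)), ?_⟩
      obtain ⟨hx1, hx2⟩ := (κ c n).2
      have hnr : ¬ ((1:ℝ) ≤ (κ c n : ℝ)) := by push_neg; linarith
      simp only [if_pos hx1, if_neg hnr]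
      rw [hx2, hG' c n, hn]
  · intro x
    rcases lt_or_ge x 1 with hx | hx
    · right
      apply (hh_diff x).congr_of_eventuallyEq
      filter_upwards [Iio_mem_nhds hx] with t ht
      exact if_neg (not_le.mpr (Set.mem_Iio.mp ht))
    · left
      apply (hh_diff x).congr_of_eventuallyEq
      have : (-1:ℝ) < x := by linarith
      filter_upwards [Ioi_mem_nhds this] with t ht
      exact if_neg (not_le.mpr (Set.mem_Ioi.mp ht))

lemma sard (g : ℝ → ℝ) :
    volume (g '' {x | DifferentiableAt ℝ g x ∧ deriv g x = 0}) = 0 := by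
  apply addHaar_image_eq_zero_of_det_fderivWithin_eq_zero volume
    (f' := fun x => fderiv ℝ g x)
  · exact fun x hx => (hx.1.hasFDerivAt).hasFDerivWithinAt
  · intro x hx
    have h1 : (fderiv ℝ g x).det = fderiv ℝ g x 1 := by
      have hf : ((fderiv ℝ g x) : ℝ →ₗ[ℝ] ℝ) = fderiv ℝ g x 1 • LinearMap.id := by
        ext; simp [mul_comm]
      show LinearMap.det ((fderiv ℝ g x) : ℝ →ₗ[ℝ] ℝ) = _
      rw [hf, LinearMap.det_smul, LinearMap.det_id, Module.finrank_self]
      simp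
    rw [h1, fderiv_apply_one_eq_deriv, hx.2]

lemma fiber_countable (g : ℝ → ℝ) (c : ℝ)
    (hc : c ∉ g '' {x | DifferentiableAt ℝ g x ∧ deriv g x = 0}) :
    {x | DifferentiableAt ℝ g x ∧ g x = c}.Countable := by
  set S := {x | DifferentiableAt ℝ g x ∧ g x = c} with hS
  have hiso : ∀ x ∈ S, 𝓝[≠] x ⊓ Filter.principal S = ⊥ := by
    intro x hx
    have hd : deriv g x ≠ 0 := by
      intro h0
      exact hc ⟨x, ⟨hx.1, h0⟩, hx.2⟩
    have hslope : Filter.Tendsto (slope g x) (𝓝[≠] x) (𝓝 (deriv g x)) :=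
      (hasDerivAt_iff_tendsto_slope).mp hx.1.hasDerivAt
    have hne : ∀ᶠ t in 𝓝[≠] x, slope g x t ≠ 0 :=
      hslope (isOpen_ne.mem_nhds hd)
    rw [inf_principal_eq_bot]
    filter_upwards [hne, self_mem_nhdsWithin] with t ht ht'
    intro htS
    apply ht
    rw [slope_def_field, htS.2, hx.2, sub_self, div_eq_zero_iff]
    left; rfl
  haveI : DiscreteTopology ↥S := discreteTopology_subtype_iff.mpr hiso
  haveI : TopologicalSpace.SeparableSpace ↥S := TopologicalSpace.SecondCountableTopology.to_separableSpace
  rw [← Set.countable_coe_iff]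
  exact TopologicalSpace.separableSpace_iff_countable.mp inferInstance

lemma conull_card {N : Set ℝ} (hN : volume N = 0) : Cardinal.continuum ≤ #↥(Nᶜ) := by
  obtain ⟨N', hNN', hN'meas, hN'0⟩ := exists_measurable_superset_of_null hN
  set s := N'ᶜ ∩ Icc (0:ℝ) 1 with hs
  have hsmeas : MeasurableSet s := hN'meas.compl.inter measurableSet_Icc
  have hs1 : 1 ≤ volume s := by
    have : Icc (0:ℝ) 1 ⊆ s ∪ N' := by
      intro x hx
      by_cases hxN : x ∈ N'
      · exact Or.inr hxN
      · exact Or.inl ⟨hxN, hx⟩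
    calc (1:ENNReal) = volume (Icc (0:ℝ) 1) := by rw [Real.volume_Icc]; norm_num
      _ ≤ volume (s ∪ N') := measure_mono this
      _ ≤ volume s + volume N' := measure_union_le _ _
      _ = volume s := by rw [hN'0, add_zero]
  have hsfin : volume s ≠ ⊤ := by
    have : volume s ≤ volume (Icc (0:ℝ) 1) := measure_mono Set.inter_subset_right
    rw [Real.volume_Icc] at this
    intro h; rw [h] at this; norm_num at this
  obtain ⟨K, hKs, hKcomp, hKlt⟩ := hsmeas.exists_isCompact_lt_add (μ := volume) hsfin
    (ε := 1/2) (by norm_num)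
  have hKpos : volume K ≠ 0 := by
    intro h0
    rw [h0, zero_add] at hKlt
    exact absurd (lt_of_le_of_lt hs1 hKlt) (by norm_num)
  have hKunc : ¬ K.Countable := fun h => hKpos (h.measure_zero _)
  obtain ⟨F, hFK, hFcont, hFinj⟩ :=
    hKcomp.isClosed.exists_nat_bool_injection_of_not_countable hKunc
  have hsub : Set.range F ⊆ Nᶜ := by
    intro y hy
    have : y ∈ K := hFK hy
    have : y ∈ s := hKs this
    exact fun hyN => this.1 (hNN' hyN)
  calc Cardinal.continuum = #(ℕ → Bool) := by
        rw [← Cardinal.two_power_aleph0]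
        simp [Cardinal.mk_arrow]
    _ ≤ #↥(Nᶜ) := by
        refine ⟨⟨fun b => ⟨F b, hsub ⟨b, rfl⟩⟩, fun b1 b2 h => hFinj (congrArg Subtype.val h)⟩⟩


lemma reverse (f : ℝ → ℝ × ℝ) (hsurj : Function.Surjective f)
    (hdiff : ∀ x : ℝ, DifferentiableAt ℝ (fun t => (f t).1) x ∨
      DifferentiableAt ℝ (fun t => (f t).2) x) :
    (Cardinal.continuum : Cardinal.{0}) = Cardinal.aleph 1 := by
  by_contra hne
  have hlt : Cardinal.aleph 1 < Cardinal.continuum :=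
    lt_of_le_of_ne Cardinal.aleph_one_le_continuum (fun h => hne h.symm)
  set f₁ : ℝ → ℝ := fun t => (f t).1 with hf₁
  set f₂ : ℝ → ℝ := fun t => (f t).2 with hf₂
  set M₁ := f₁ '' {x | DifferentiableAt ℝ f₁ x ∧ deriv f₁ x = 0} with hM₁
  set M₂ := f₂ '' {x | DifferentiableAt ℝ f₂ x ∧ deriv f₂ x = 0} with hM₂
  have hX : Cardinal.aleph 1 ≤ #↥(M₁ᶜ) := le_trans hlt.le (conull_card (sard f₁))
  obtain ⟨X, hXsub, hXcard⟩ := Cardinal.le_mk_iff_exists_subset.mp hX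
  set Y := ⋃ (a : ↥X), f₂ '' {x | DifferentiableAt ℝ f₁ x ∧ f₁ x = (a : ℝ)} with hY
  have hYcard : #↥Y ≤ Cardinal.aleph 1 := by
    refine le_trans (Cardinal.mk_iUnion_le _) ?_
    have hsup : ⨆ (a : ↥X), #↥(f₂ '' {x | DifferentiableAt ℝ f₁ x ∧ f₁ x = (a : ℝ)}) ≤ ℵ₀ := by
      apply ciSup_le'
      intro a
      rw [Cardinal.mk_le_aleph0_iff, Set.countable_coe_iff]
      exact (fiber_countable f₁ a (hXsub a.2)).image f₂
    calc #↥X * ⨆ (a : ↥X), #↥(f₂ '' {x | DifferentiableAt ℝ f₁ x ∧ f₁ x = (a : ℝ)})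
        ≤ Cardinal.aleph 1 * ℵ₀ := by
          apply mul_le_mul' _ hsup
          rw [hXcard]
      _ = Cardinal.aleph 1 := by
          rw [Cardinal.mul_eq_max (Cardinal.aleph0_le_aleph 1) le_rfl]
          exact max_eq_left (Cardinal.aleph0_le_aleph 1)
  have hc : ∃ c : ℝ, c ∉ M₂ ∪ Y := by
    by_contra hcc
    push_neg at hcc
    have hsub : M₂ᶜ ⊆ Y := by
      intro c hcM
      rcases hcc c with h | h
      · exact absurd h hcM
      · exact h
    have : Cardinal.continuum ≤ #↥Y :=
      le_trans (conull_card (sard f₂)) (Cardinal.mk_le_mk_of_subset hsub)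
    exact absurd (lt_of_le_of_lt (le_trans this hYcard) hlt) (lt_irrefl _)
  obtain ⟨c, hcM⟩ := hc
  have hcM₂ : c ∉ M₂ := fun h => hcM (Or.inl h)
  have hcY : c ∉ Y := fun h => hcM (Or.inr h)
  set S := {x | DifferentiableAt ℝ f₂ x ∧ f₂ x = c} with hS
  have hScnt : S.Countable := fiber_countable f₂ c hcM₂
  have hwit : ∀ a : ↥X, ∃ x : ℝ, x ∈ S ∧ f₁ x = (a : ℝ) := by
    intro a
    obtain ⟨x, hx⟩ := hsurj ((a : ℝ), c)
    have hx1 : f₁ x = (a : ℝ) := by rw [hf₁]; simp only []; rw [hx]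
    have hx2 : f₂ x = c := by rw [hf₂]; simp only []; rw [hx]
    rcases hdiff x with hd | hd
    · exfalso
      apply hcY
      rw [hY]
      refine Set.mem_iUnion.mpr ⟨a, ⟨x, ⟨hd, hx1⟩, hx2⟩⟩
    · exact ⟨x, ⟨hd, hx2⟩, hx1⟩
  choose wit hwitS hwitf using hwit
  have hinj : Function.Injective (fun a : ↥X => (⟨wit a, hwitS a⟩ : ↥S)) := by
    intro a b hab
    have : wit a = wit b := congrArg Subtype.val hab
    apply Subtype.coe_injective
    show (a : ℝ) = (b : ℝ)
    rw [← hwitf a, ← hwitf b, this]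
  have : Cardinal.aleph 1 ≤ ℵ₀ := by
    calc Cardinal.aleph 1 = #↥X := hXcard.symm
      _ ≤ #↥S := Cardinal.mk_le_of_injective hinj
      _ ≤ ℵ₀ := by rw [Cardinal.mk_le_aleph0_iff, Set.countable_coe_iff]; exact hScnt
  exact absurd (lt_of_lt_of_le Cardinal.aleph0_lt_aleph_one this) (lt_irrefl _)

/-- Morayne: CH holds iff there is a Peano function `f : ℝ → ℝ × ℝ` such that at
every point at least one of the coordinate functions is differentiable. -/
theorem CH_iff_differentiable_peano_function :
    Cardinal.continuum = Cardinal.aleph 1 ↔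
      ∃ f : ℝ → ℝ × ℝ, Function.Surjective f ∧
        ∀ x : ℝ, DifferentiableAt ℝ (fun t => (f t).1) x ∨
          DifferentiableAt ℝ (fun t => (f t).2) x := by
  constructor
  · intro h
    apply forward
    rw [← Cardinal.lift_inj.{0}, Cardinal.lift_continuum, Cardinal.lift_aleph,
      Ordinal.lift_one]
    exact h
  · rintro ⟨f, hs, hd⟩
    have h0 := reverse f hs hd
    have h2 := congrArg Cardinal.lift h0
    rw [Cardinal.lift_continuum, Cardinal.lift_aleph, Ordinal.lift_one] at h2
    exact h2
end

section
/- Let f : ℝ → ℝ be any function. Then there exists a set H ⊆ ℝ whose complement ℝ \ H is an analytic set (i.e., H is boldface Π¹₁), such that {x ∈ ℝ : f is differentiable at x} ⊆ H, and the set {y ∈ ℝ : f⁻¹({y}) ∩ H is uncountable} is Lebesgue null. -/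
open MeasureTheory Filter Set Topology

lemma exists_accPt_of_uncountable {s : Set ℝ} (hs : ¬ s.Countable) :
    ∃ x ∈ s, AccPt x (Filter.principal s) := by
  by_contra h
  push_neg at h
  obtain ⟨b, bct, -, hb⟩ := TopologicalSpace.exists_countable_basis ℝ
  apply hs
  have hsub : s ⊆ ⋃ B ∈ {B ∈ b | (B ∩ s).Subsingleton}, B ∩ s := by
    intro x hx
    have hnot := h x hx
    rw [accPt_iff_nhds] at hnot
    push_neg at hnot
    obtain ⟨U, hU, hU'⟩ := hnot
    obtain ⟨B, hBb, hxB, hBU⟩ := hb.mem_nhds_iff.mp hU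
    refine mem_biUnion (show B ∈ _ from ⟨hBb, ?_⟩) ⟨hxB, hx⟩
    intro y hy z hz
    rw [hU' y ⟨hBU hy.1, hy.2⟩, hU' z ⟨hBU hz.1, hz.2⟩]
  refine Set.Countable.mono hsub ?_
  exact Set.Countable.biUnion (bct.mono (sep_subset _ _))
    (fun B hB => hB.2.countable)

/-- For any `f : ℝ → ℝ` there is a coanalytic set `H` containing every point of
differentiability of `f` such that the set of values whose fiber meets `H` in an
uncountable set is Lebesgue null. -/
theorem exists_coanalytic_H (f : ℝ → ℝ) :
    ∃ H : Set ℝ, MeasureTheory.AnalyticSet Hᶜ ∧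
      {x : ℝ | DifferentiableAt ℝ f x} ⊆ H ∧
      volume {y : ℝ | ¬ (f ⁻¹' {y} ∩ H).Countable} = 0 := by
  set H := {x : ℝ | DifferentiableAt ℝ f x} with hH
  refine ⟨H, ((measurableSet_of_differentiableAt ℝ f).compl).analyticSet, subset_rfl, ?_⟩
  set S := {x : ℝ | DifferentiableAt ℝ f x ∧ deriv f x = 0} with hS
  have key : {y : ℝ | ¬ (f ⁻¹' {y} ∩ H).Countable} ⊆ f '' S := by
    intro y hy
    obtain ⟨x, hx, hacc⟩ := exists_accPt_of_uncountable hy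
    have hxH : DifferentiableAt ℝ f x := hx.2
    have hfx : f x = y := hx.1
    have hderiv : deriv f x = 0 := by
      have hd : HasDerivAt f (deriv f x) x := hxH.hasDerivAt
      rw [hasDerivAt_iff_tendsto_slope] at hd
      haveI : (𝓝[≠] x ⊓ Filter.principal (f ⁻¹' {y} ∩ H)).NeBot := hacc
      have h1 : Tendsto (slope f x) (𝓝[≠] x ⊓ Filter.principal (f ⁻¹' {y} ∩ H))
          (nhds (deriv f x)) := hd.mono_left inf_le_left
      have h2 : Tendsto (slope f x) (𝓝[≠] x ⊓ Filter.principal (f ⁻¹' {y} ∩ H))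
          (nhds 0) := by
        refine Tendsto.congr' ?_ tendsto_const_nhds
        filter_upwards [mem_inf_of_right (mem_principal_self (f ⁻¹' {y} ∩ H))] with z hz
        have hz1 : f z = y := hz.1
        simp [slope_def_field, hz1, hfx]
      exact tendsto_nhds_unique h1 h2
    exact ⟨x, ⟨hxH, hderiv⟩, hfx⟩
  refine measure_mono_null key ?_
  refine MeasureTheory.addHaar_image_eq_zero_of_det_fderivWithin_eq_zero volume
    (f' := fun x => (1 : ℝ →L[ℝ] ℝ).smulRight (deriv f x)) ?_ ?_
  · intro x hx
    exact hx.1.hasDerivAt.hasFDerivAt.hasFDerivWithinAt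
  · intro x hx
    rw [ContinuousLinearMap.smulRight_one_eq_toSpanSingleton, ContinuousLinearMap.det_toSpanSingleton, hx.2]
end

section
/- Let f : ℝ → ℝ be any function, let C = {x ∈ ℝ : f is continuous at x}, and define H = {x ∈ C : ∃ y ∈ ℝ, ∀ ε > 0, ∃ δ > 0, ∀ z ∈ C, z ≠ x → |x − z| < δ → |(f(x) − f(z))/(x − z) − y| < ε}. Then the complement ℝ \ H is an analytic set (i.e., H is boldface Π¹₁). -/
open MeasureTheory Set

/-- The "bad" sets: points of the continuity set where the difference quotient
oscillates by more than `1/(n+1)` at scale `1/(m+1)`. -/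
def badSet (f : ℝ → ℝ) (n m : ℕ) : Set ℝ :=
  {x | ContinuousAt f x ∧ ∃ z z' : ℝ,
    (ContinuousAt f z ∧ ContinuousAt f z' ∧ z ≠ x ∧ z' ≠ x ∧
      |x - z| < 1 / (m + 1) ∧ |x - z'| < 1 / (m + 1)) ∧
    1 / (n + 1) < |(f x - f z) / (x - z) - (f x - f z') / (x - z')|}

lemma analyticSet_badSet (f : ℝ → ℝ) (n m : ℕ) : AnalyticSet (badSet f n m) := by
  set C : Set ℝ := {x | ContinuousAt f x} with hCdef
  have hCmeas : MeasurableSet C := (IsGδ.setOf_continuousAt f).measurableSet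
  set S : Set (ℝ × ℝ × ℝ) := C ×ˢ (C ×ˢ C) with hSdef
  have hSmeas : MeasurableSet S := hCmeas.prod (hCmeas.prod hCmeas)
  -- coordinate functions on the subtype S
  let X : ↥S → ℝ := fun p => p.val.1
  let Z : ↥S → ℝ := fun p => p.val.2.1
  let Z' : ↥S → ℝ := fun p => p.val.2.2
  have hX : Continuous X := continuous_fst.comp continuous_subtype_val
  have hZ : Continuous Z :=
    (continuous_fst.comp continuous_snd).comp continuous_subtype_val
  have hZ' : Continuous Z' :=
    (continuous_snd.comp continuous_snd).comp continuous_subtype_val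
  -- `f` is continuous on `C`, hence its restriction is continuous
  have hfC : Continuous (C.restrict f) := by
    apply ContinuousOn.restrict
    intro x hx
    exact (hx : ContinuousAt f x).continuousWithinAt
  let FX : ↥S → ℝ := fun p => f p.val.1
  let FZ : ↥S → ℝ := fun p => f p.val.2.1
  let FZ' : ↥S → ℝ := fun p => f p.val.2.2
  have hFX : Continuous FX := by
    have : Continuous (fun p : ↥S => (⟨p.val.1, p.2.1⟩ : ↥C)) :=
      Continuous.subtype_mk hX _
    exact hfC.comp this
  have hFZ : Continuous FZ := by
    have : Continuous (fun p : ↥S => (⟨p.val.2.1, p.2.2.1⟩ : ↥C)) :=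
      Continuous.subtype_mk hZ _
    exact hfC.comp this
  have hFZ' : Continuous FZ' := by
    have : Continuous (fun p : ↥S => (⟨p.val.2.2, p.2.2.2⟩ : ↥C)) :=
      Continuous.subtype_mk hZ' _
    exact hfC.comp this
  -- the open set of "good configurations"
  let V : Set ↥S := {p | Z p ≠ X p ∧ Z' p ≠ X p ∧
    |X p - Z p| < 1 / (m + 1) ∧ |X p - Z' p| < 1 / (m + 1)}
  have hV : IsOpen V := by
    have h1 : IsOpen {p : ↥S | Z p ≠ X p} := isOpen_ne_fun hZ hX
    have h2 : IsOpen {p : ↥S | Z' p ≠ X p} := isOpen_ne_fun hZ' hX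
    have h3 : IsOpen {p : ↥S | |X p - Z p| < 1 / (m + 1)} :=
      isOpen_lt (hX.sub hZ).abs continuous_const
    have h4 : IsOpen {p : ↥S | |X p - Z' p| < 1 / (m + 1)} :=
      isOpen_lt (hX.sub hZ').abs continuous_const
    exact h1.inter (h2.inter (h3.inter h4))
  -- the difference of difference quotients, continuous on V
  let g : ↥S → ℝ := fun p =>
    |(FX p - FZ p) / (X p - Z p) - (FX p - FZ' p) / (X p - Z' p)|
  have hg : ContinuousOn g V := by
    apply ContinuousOn.abs
    apply ContinuousOn.sub
    · exact ContinuousOn.div (hFX.sub hFZ).continuousOn (hX.sub hZ).continuousOn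
        (fun p hp => sub_ne_zero.2 (Ne.symm hp.1))
    · exact ContinuousOn.div (hFX.sub hFZ').continuousOn (hX.sub hZ').continuousOn
        (fun p hp => sub_ne_zero.2 (Ne.symm hp.2.1))
  let W : Set ↥S := V ∩ g ⁻¹' Ioi (1 / (n + 1))
  have hW : IsOpen W := hg.isOpen_inter_preimage hV isOpen_Ioi
  have hWmeas : MeasurableSet (Subtype.val '' W : Set (ℝ × ℝ × ℝ)) :=
    hSmeas.subtype_image hW.measurableSet
  have himg : AnalyticSet ((fun p : ℝ × ℝ × ℝ => p.1) '' (Subtype.val '' W)) :=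
    hWmeas.analyticSet_image measurable_fst
  have heq : badSet f n m = (fun p : ℝ × ℝ × ℝ => p.1) '' (Subtype.val '' W) := by
    ext x
    constructor
    · rintro ⟨hx, z, z', ⟨hz, hz', hzx, hz'x, h1, h2⟩, hq⟩
      refine ⟨(x, z, z'), ⟨⟨(x, z, z'), ⟨hx, hz, hz'⟩⟩, ⟨⟨hzx, hz'x, h1, h2⟩, hq⟩, rfl⟩, rfl⟩
    · rintro ⟨p, ⟨⟨q, hq, hqmem⟩, rfl⟩⟩
      subst hqmem
      obtain ⟨⟨hzx, hz'x, h1, h2⟩, hgt⟩ := hq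
      exact ⟨q.2.1, q.val.2.1, q.val.2.2, ⟨q.2.2.1, q.2.2.2, hzx, hz'x, h1, h2⟩, hgt⟩
  rw [heq]
  exact himg

lemma one_div_succ_le {k l : ℕ} (h : l ≤ k) :
    (1 : ℝ) / (k + 1) ≤ 1 / (l + 1) := by
  apply one_div_le_one_div_of_le
  · positivity
  · have : (l : ℝ) ≤ k := Nat.cast_le.2 h
    linarith

/-- The set `H` of points of the continuity set `C` of `f` where `f` has a
derivative relative to `C` is coanalytic. -/
theorem H_is_coanalytic (f : ℝ → ℝ) :
    MeasureTheory.AnalyticSet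
      ({x : ℝ | ContinuousAt f x ∧
        ∃ y : ℝ, ∀ ε > (0 : ℝ), ∃ δ > (0 : ℝ), ∀ z : ℝ, ContinuousAt f z →
          z ≠ x → |x - z| < δ → |(f x - f z) / (x - z) - y| < ε}ᶜ) := by
  have hCmeas : MeasurableSet {x : ℝ | ContinuousAt f x} :=
    (IsGδ.setOf_continuousAt f).measurableSet
  have key : ({x : ℝ | ContinuousAt f x ∧
      ∃ y : ℝ, ∀ ε > (0 : ℝ), ∃ δ > (0 : ℝ), ∀ z : ℝ, ContinuousAt f z →
        z ≠ x → |x - z| < δ → |(f x - f z) / (x - z) - y| < ε}ᶜ)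
      = {x : ℝ | ContinuousAt f x}ᶜ ∪ ⋃ n, ⋂ m, badSet f n m := by
    ext x
    by_cases hx : ContinuousAt f x
    · simp only [mem_compl_iff, mem_setOf_eq, mem_union, mem_iUnion, mem_iInter,
        not_and, hx, true_implies, not_true_eq_false, false_or]
      constructor
      · -- no derivative → bad at some scale
        intro hno
        by_contra hcon
        push_neg at hcon
        -- hcon : ∀ n, ∃ m, x ∉ badSet f n m
        have h' : ∀ n : ℕ, ∃ m : ℕ, ∀ z z' : ℝ,
            ContinuousAt f z → ContinuousAt f z' → z ≠ x → z' ≠ x →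
            |x - z| < 1 / (m + 1) → |x - z'| < 1 / (m + 1) →
            |(f x - f z) / (x - z) - (f x - f z') / (x - z')| ≤ 1 / (n + 1) := by
          intro n
          obtain ⟨m, hm⟩ := hcon n
          refine ⟨m, fun z z' hz hz' hzx hz'x h1 h2 => ?_⟩
          by_contra hgt
          push_neg at hgt
          exact hm ⟨hx, z, z', ⟨hz, hz', hzx, hz'x, h1, h2⟩, hgt⟩
        apply hno
        -- construct a derivative value
        by_cases hiso : ∃ m : ℕ, ∀ z : ℝ, ContinuousAt f z → z ≠ x →
            ¬ (|x - z| < 1 / (m + 1))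
        · obtain ⟨m, hm⟩ := hiso
          refine ⟨0, fun ε hε => ⟨1 / (m + 1), by positivity,
            fun z hz hzx hlt => absurd hlt (hm z hz hzx)⟩⟩
        · push_neg at hiso
          choose w hw1 hw2 hw3 using hiso
          choose M hM using h'
          set u : ℕ → ℝ := fun k => (f x - f (w k)) / (x - w k) with hu
          have hcau : CauchySeq u := by
            rw [Metric.cauchySeq_iff]
            intro ε hε
            obtain ⟨n, hn⟩ := exists_nat_one_div_lt hε
            refine ⟨M n, fun k hk l hl => ?_⟩
            rw [Real.dist_eq]
            calc |u k - u l| ≤ 1 / (n + 1) :=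
                  hM n (w k) (w l) (hw1 k) (hw1 l) (hw2 k) (hw2 l)
                    ((hw3 k).trans_le (one_div_succ_le hk))
                    ((hw3 l).trans_le (one_div_succ_le hl))
              _ < ε := hn
          obtain ⟨y, hy⟩ := cauchySeq_tendsto_of_complete hcau
          refine ⟨y, fun ε hε => ?_⟩
          obtain ⟨n, hn⟩ := exists_nat_one_div_lt (half_pos hε)
          refine ⟨1 / (M n + 1), by positivity, fun z hz hzx hlt => ?_⟩
          obtain ⟨N, hN⟩ := Metric.tendsto_atTop.1 hy (ε / 2) (half_pos hε)
          set k := max N (M n) with hk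
          have h1 : |(f x - f z) / (x - z) - u k| ≤ 1 / (n + 1) :=
            hM n z (w k) hz (hw1 k) hzx (hw2 k) hlt
              ((hw3 k).trans_le (one_div_succ_le (le_max_right N (M n))))
          have h2 : |u k - y| < ε / 2 := by
            have := hN k (le_max_left N (M n))
            rwa [Real.dist_eq] at this
          calc |(f x - f z) / (x - z) - y|
              ≤ |(f x - f z) / (x - z) - u k| + |u k - y| := abs_sub_le _ _ _
            _ ≤ 1 / (n + 1) + |u k - y| := by linarith
            _ < ε / 2 + ε / 2 := by linarith
            _ = ε := by ring
      · -- bad at some scale → no derivative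
        rintro ⟨n, hn⟩ ⟨y, hy⟩
        have hpos : (0 : ℝ) < 1 / (2 * (n + 1)) := by positivity
        obtain ⟨δ, hδ, hδ'⟩ := hy (1 / (2 * (n + 1))) hpos
        obtain ⟨m, hm⟩ := exists_nat_one_div_lt hδ
        obtain ⟨-, z, z', ⟨hz, hz', hzx, hz'x, h1, h2⟩, hq⟩ := hn m
        have e1 : |(f x - f z) / (x - z) - y| < 1 / (2 * (n + 1)) :=
          hδ' z hz hzx (h1.trans hm)
        have e2 : |(f x - f z') / (x - z') - y| < 1 / (2 * (n + 1)) :=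
          hδ' z' hz' hz'x (h2.trans hm)
        have tri : |(f x - f z) / (x - z) - (f x - f z') / (x - z')|
            ≤ |(f x - f z) / (x - z) - y| + |(f x - f z') / (x - z') - y| := by
          have h := abs_sub_le ((f x - f z) / (x - z)) y ((f x - f z') / (x - z'))
          rwa [abs_sub_comm y ((f x - f z') / (x - z'))] at h
        have hne : (0:ℝ) < (n : ℝ) + 1 := by positivity
        have harith : 1 / (2 * ((n : ℝ) + 1)) + 1 / (2 * ((n : ℝ) + 1)) = 1 / ((n:ℝ) + 1) := by
          rw [← add_div]
          rw [div_eq_div_iff (by positivity) (by positivity)]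
          ring
        linarith [hq, tri]
    · simp [hx]
  rw [key]
  rw [Set.union_eq_iUnion]
  apply AnalyticSet.iUnion
  rintro (_ | _)
  · exact AnalyticSet.iUnion fun n => AnalyticSet.iInter fun m => analyticSet_badSet f n m
  · exact hCmeas.compl.analyticSet
end

section
/- Let f : ℝ → ℝ be any function, let C = {x ∈ ℝ : f is continuous at x}, and define H = {x ∈ C : ∃ y ∈ ℝ, ∀ ε > 0, ∃ δ > 0, ∀ z ∈ C, z ≠ x → |x − z| < δ → |(f(x) − f(z))/(x − z) − y| < ε}. Then the set {y ∈ ℝ : f⁻¹({y}) ∩ H is uncountable} is Lebesgue null. -/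
open MeasureTheory Set Filter Topology Metric

/-- In `ℝ`, the set of isolated points of a set is countable. -/
lemma countable_isolated_pts (A : Set ℝ) :
    {x | x ∈ A ∧ x ∉ closure (A \ {x})}.Countable := by
  set T := {x | x ∈ A ∧ x ∉ closure (A \ {x})} with hT
  have key : ∀ x ∈ T, ∃ r > 0, ∀ z ∈ A, |z - x| < r → z = x := by
    intro x hx
    have h2 := hx.2
    rw [Metric.mem_closure_iff] at h2
    push_neg at h2
    obtain ⟨r, hr, hball⟩ := h2
    refine ⟨r, hr, fun z hz hzr => ?_⟩
    by_contra hne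
    have := hball z ⟨hz, by simpa using hne⟩
    rw [Real.dist_eq, abs_sub_comm] at this
    exact absurd hzr (not_lt.2 this)
  choose! r hr hrA using key
  have : T.PairwiseDisjoint (fun x => Metric.ball x (r x / 2)) := by
    intro x hx x' hx' hne
    refine Set.disjoint_left.2 fun u hu hu' => hne ?_
    have hdd : dist x x' < r x / 2 + r x' / 2 := by
      calc dist x x' ≤ dist u x + dist u x' := dist_triangle_left _ _ _
        _ < r x / 2 + r x' / 2 := add_lt_add (mem_ball.1 hu) (mem_ball.1 hu')
    rcases le_total (r x) (r x') with h | h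
    · have : dist x x' < r x' := by linarith
      have := hrA x' hx' x hx.1 (by rwa [Real.dist_eq] at this)
      exact this
    · have : dist x' x < r x := by rw [dist_comm]; linarith
      exact (hrA x hx x' hx'.1 (by rwa [Real.dist_eq] at this)).symm
  exact this.countable_of_isOpen (fun x _ => isOpen_ball)
    (fun x hx => ⟨x, by simpa using half_pos (hr x hx)⟩)

/-- The set of values `y` whose fiber meets the relative-differentiability set
`H` in an uncountable set is Lebesgue null. -/
theorem uncountable_fibers_null (f : ℝ → ℝ) :
    volume {y : ℝ | ¬ (f ⁻¹' {y} ∩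
      {x : ℝ | ContinuousAt f x ∧
        ∃ w : ℝ, ∀ ε > (0 : ℝ), ∃ δ > (0 : ℝ), ∀ z : ℝ, ContinuousAt f z →
          z ≠ x → |x - z| < δ → |(f x - f z) / (x - z) - w| < ε}).Countable}
      = 0 := by
  set Hs : Set ℝ := {x : ℝ | ContinuousAt f x ∧
      ∃ w : ℝ, ∀ ε > (0 : ℝ), ∃ δ > (0 : ℝ), ∀ z : ℝ, ContinuousAt f z →
        z ≠ x → |x - z| < δ → |(f x - f z) / (x - z) - w| < ε} with hHs
  set S : Set ℝ := {x | x ∈ Hs ∧ x ∈ closure ((f ⁻¹' {f x} ∩ Hs) \ {x})} with hS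
  -- for x ∈ S, the witness w is 0, and the condition holds with w = 0
  have key : ∀ x ∈ S, ∀ ε > (0:ℝ), ∃ δ > (0:ℝ), ∀ z : ℝ, ContinuousAt f z →
      z ≠ x → |x - z| < δ → |(f x - f z) / (x - z)| < ε := by
    intro x hx ε hε
    obtain ⟨⟨hc, w, hw⟩, hacc⟩ := hx
    have hw0 : w = 0 := by
      by_contra hne
      have hwpos : 0 < |w| := abs_pos.2 hne
      obtain ⟨δ, hδ, hδw⟩ := hw |w| hwpos
      rw [Metric.mem_closure_iff] at hacc
      obtain ⟨z, ⟨⟨hfz, hzH⟩, hzx⟩, hdist⟩ := hacc δ hδ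
      have hzx' : z ≠ x := by simpa using hzx
      have h1 := hδw z hzH.1 hzx' (by rwa [Real.dist_eq] at hdist)
      have hfzx : f z = f x := hfz
      rw [hfzx, sub_self, zero_div, zero_sub, abs_neg] at h1
      exact lt_irrefl _ h1
    obtain ⟨δ, hδ, hδw⟩ := hw ε hε
    exact ⟨δ, hδ, fun z hz hzx hlt => by
      have := hδw z hz hzx hlt; rwa [hw0, sub_zero] at this⟩
  -- derivative 0 within S at every point of S
  have hderiv : ∀ x ∈ S, HasDerivWithinAt f 0 S x := by
    intro x hx
    rw [hasDerivWithinAt_iff_tendsto_slope]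
    rw [Metric.tendsto_nhdsWithin_nhds]
    intro ε hε
    obtain ⟨δ, hδ, h⟩ := key x hx ε hε
    refine ⟨δ, hδ, fun z hz hdist => ?_⟩
    obtain ⟨hzS, hzx⟩ := hz
    have hzx' : z ≠ x := by simpa using hzx
    have hC : ContinuousAt f z := hzS.1.1
    have := h z hC hzx' (by rw [Real.dist_eq] at hdist; rwa [abs_sub_comm])
    rw [Real.dist_eq, sub_zero, slope_def_field]
    have heq : (f z - f x) / (z - x) = (f x - f z) / (x - z) := by
      rw [← neg_div_neg_eq]; ring_nf
    rwa [heq]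
  -- the image of S is null (Sard-type)
  have himg : volume (f '' S) = 0 := by
    apply addHaar_image_eq_zero_of_det_fderivWithin_eq_zero
      (f' := fun _ => (0 : ℝ →L[ℝ] ℝ))
    · intro x hx
      have := hderiv x hx
      rw [hasDerivWithinAt_iff_hasFDerivWithinAt] at this
      have h0 : ContinuousLinearMap.toSpanSingleton ℝ (0 : ℝ) = 0 := by
        ext; simp
      rwa [h0] at this
    · intro x hx
      simp [ContinuousLinearMap.det]
  refine measure_mono_null ?_ himg
  intro y hy
  simp only [mem_setOf_eq] at hy
  set A := f ⁻¹' {y} ∩ Hs with hA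
  have hne : ¬ (A ⊆ {x | x ∈ A ∧ x ∉ closure (A \ {x})}) := by
    intro h
    exact hy ((countable_isolated_pts A).mono h)
  rw [Set.not_subset] at hne
  obtain ⟨x, hxA, hxT⟩ := hne
  simp only [mem_setOf_eq, hxA, true_and, not_not] at hxT
  have hfx : f x = y := hxA.1
  refine ⟨x, ⟨hxA.2, ?_⟩, hfx⟩
  rw [hfx]
  exact hxT
end

section
/- Assume the Continuum Hypothesis. Then there exists a function f : ℝ → ℝ → ℕ such that for all x, x', y, y' ∈ ℝ with x ≠ x' and y ≠ y', f is not constant on {x, x'} × {y, y'}; that is, there is no pair of two-element sets C, D ⊆ ℝ on which f is monochromatic. -/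
/-- Under CH there is a colouring `f : ℝ × ℝ → ℕ` with no monochromatic
`2 × 2` rectangle. -/
theorem CH_implies_no_monochromatic_square
    (hCH : Cardinal.continuum = Cardinal.aleph 1) :
    ∃ f : ℝ → ℝ → ℕ, ∀ x x' y y' : ℝ, x ≠ x' → y ≠ y' →
      ¬ (f x y = f x' y ∧ f x y = f x y' ∧ f x y = f x' y') := by
  have hCH0 : Cardinal.continuum.{0} = Cardinal.aleph.{0} 1 := by
    apply Cardinal.lift_injective
    rw [Cardinal.lift_continuum, Cardinal.lift_aleph, Ordinal.lift_one]
    exact hCH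
  have hmk : (Cardinal.mk ℝ) = Cardinal.mk (Cardinal.aleph 1).ord.ToType := by
    rw [Cardinal.mk_toType, Cardinal.card_ord, Cardinal.mk_real, hCH0]
  obtain ⟨φ⟩ := Cardinal.eq.mp hmk
  set g : ℝ → Ordinal := fun x =>
    (((Ordinal.ToType.mk (o := (Cardinal.aleph 1).ord)).symm (φ x) : Set.Iio (Cardinal.aleph 1).ord) :
      Ordinal) with hgdef
  have hginj : Function.Injective g := fun a b h =>
    φ.injective ((Ordinal.ToType.mk (o := (Cardinal.aleph 1).ord)).symm.injective (Subtype.ext h))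
  have hglt : ∀ x, g x < (Cardinal.aleph 1).ord := fun x =>
    ((Ordinal.ToType.mk (o := (Cardinal.aleph 1).ord)).symm (φ x)).2
  have hcount : ∀ y : ℝ, {x : ℝ | g x < g y}.Countable := by
    intro y
    rw [Cardinal.countable_iff_lt_aleph_one]
    have h1 : Cardinal.lift.{1} (Cardinal.mk {x : ℝ | g x < g y}) ≤
        Cardinal.lift.{0} (Cardinal.mk (Set.Iio (g y))) :=
      Cardinal.lift_mk_le'.mpr ⟨⟨fun x => ⟨g x.1, x.2⟩,
        fun a b h => Subtype.ext (hginj (Subtype.mk_eq_mk.mp h))⟩⟩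
    rw [Ordinal.mk_Iio_ordinal, Cardinal.lift_lift] at h1
    have h2 : Cardinal.mk {x : ℝ | g x < g y} ≤ (g y).card := Cardinal.lift_le.mp h1
    exact lt_of_le_of_lt h2 (Cardinal.lt_ord.mp (hglt y))
  choose enc henc using fun y => Set.countable_iff_exists_injective.mp (hcount y)
  set E : ℝ → ℝ → ℕ := fun y x => if h : g x < g y then enc y ⟨x, h⟩ else 0 with hE
  have hEinj : ∀ y x x', g x < g y → g x' < g y → E y x = E y x' → x = x' := by
    intro y x x' h1 h2 h3
    simp only [hE, dif_pos h1, dif_pos h2] at h3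
    exact congrArg Subtype.val (henc y h3)
  refine ⟨fun x y => if g x < g y then 3 * E y x else
    if g y < g x then 3 * E x y + 1 else 2, ?_⟩
  rintro x x' y y' hxx hyy ⟨h1, h2, -⟩
  dsimp only at h1 h2
  rcases lt_trichotomy (g x) (g y) with h | h | h
  · -- f x y = 3 * E y x; use column y with h1
    rw [if_pos h] at h1
    by_cases h' : g x' < g y
    · rw [if_pos h'] at h1
      exact hxx (hEinj y x x' h h' (by omega))
    · rw [if_neg h'] at h1
      split at h1 <;> omega
  · -- x = y, value 2
    obtain rfl : x = y := hginj h
    rw [if_neg (lt_irrefl _), if_neg (lt_irrefl _)] at h2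
    rcases lt_trichotomy (g x) (g y') with h' | h' | h'
    · rw [if_pos h'] at h2; omega
    · exact hyy (hginj h')
    · rw [if_neg (asymm h'), if_pos h'] at h2; omega
  · -- g y < g x : f x y = 3 * E x y + 1; use row x with h2
    rw [if_neg (asymm h), if_pos h] at h2
    by_cases h' : g y' < g x
    · have h'' : ¬ g x < g y' := asymm h'
      rw [if_neg h'', if_pos h'] at h2
      exact hyy (hEinj x y y' h h' (by omega))
    · by_cases h'' : g x < g y'
      · rw [if_pos h''] at h2; omega
      · rw [if_neg h'', if_neg h'] at h2; omega
end

section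
/- Assume the negation of the Continuum Hypothesis (the cardinality of the continuum is strictly greater than ℵ₁). Then for every colouring g : ℝ → ℕ there exist four distinct reals x₀₀, x₀₁, x₁₀, x₁₁ with g(x₀₀) = g(x₀₁) = g(x₁₀) = g(x₁₁) and x₀₀ + x₁₁ = x₀₁ + x₁₀. -/
private lemma four_indep' {ι : Type*} {v : ι → ℝ} (hv : LinearIndependent ℚ v) {a b c d : ι}
    (hab : a ≠ b) (hac : a ≠ c) (had : a ≠ d) (hbc : b ≠ c) (hbd : b ≠ d) (hcd : c ≠ d)
    (heq : v a + v b = v c + v d) : False := by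
  classical
  have h' := linearIndependent_iff'.mp hv {a, b, c, d}
    (fun x => if x = a then 1 else if x = b then 1 else if x = c then -1 else -1)
  have hsum : ∑ i ∈ ({a, b, c, d} : Finset ι),
      (if i = a then (1:ℚ) else if i = b then 1 else if i = c then -1 else -1) • v i = 0 := by
    rw [show ({a, b, c, d} : Finset ι) = insert a (insert b (insert c {d})) from rfl]
    rw [Finset.sum_insert (by simp [hab, hac, had]),
        Finset.sum_insert (by simp [hbc, hbd]),
        Finset.sum_insert (by simp [hcd]), Finset.sum_singleton]
    norm_num [hab.symm, hac.symm, had.symm, hbc.symm, hbd.symm, hcd.symm]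
    linarith
  have := h' hsum a (by simp)
  simp at this

open Cardinal in
/-- Schur-type partition result: assuming ¬CH, every colouring `g : ℝ → ℕ`
admits four distinct monochromatic reals with `x₀₀ + x₁₁ = x₀₁ + x₁₀`. -/
theorem schur_partition_of_not_CH
    (h : Cardinal.aleph 1 < Cardinal.continuum) (g : ℝ → ℕ) :
    ∃ x₀₀ x₀₁ x₁₀ x₁₁ : ℝ,
      x₀₀ ≠ x₀₁ ∧ x₀₀ ≠ x₁₀ ∧ x₀₀ ≠ x₁₁ ∧ x₀₁ ≠ x₁₀ ∧ x₀₁ ≠ x₁₁ ∧ x₁₀ ≠ x₁₁ ∧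
      g x₀₀ = g x₀₁ ∧ g x₀₀ = g x₁₀ ∧ g x₀₀ = g x₁₁ ∧
      x₀₀ + x₁₁ = x₀₁ + x₁₀ := by
  classical
  have h0 : (Cardinal.aleph 1 : Cardinal.{0}) < Cardinal.continuum := by
    refine Cardinal.lift_lt.mp ?_
    rw [Cardinal.lift_aleph, Cardinal.lift_continuum]
    simpa using h
  have hrank : (Cardinal.aleph 2 : Cardinal.{0}) ≤ Module.rank ℚ ℝ := by
    rw [Real.rank_rat_real]
    have h2 : (Cardinal.aleph 2 : Cardinal.{0}) = Order.succ (Cardinal.aleph 1) := by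
      rw [← Cardinal.aleph_succ]; norm_num
    rw [h2]
    exact Order.succ_le_of_lt h0
  obtain ⟨s, hs, hsli⟩ := le_rank_iff_exists_linearIndependent.mp hrank
  set K1 := (Cardinal.aleph 1 : Cardinal.{0}).out with hK1
  set K2 := (Cardinal.aleph 2 : Cardinal.{0}).out with hK2
  have hmk : #(K1 ⊕ K2) = #s := by
    rw [Cardinal.mk_sum, Cardinal.mk_out, Cardinal.mk_out, hs,
        Cardinal.lift_id, Cardinal.lift_id]
    exact Cardinal.add_eq_right (Cardinal.aleph0_le_aleph 2)
      (Cardinal.aleph_le_aleph.mpr one_le_two)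
  obtain ⟨e⟩ := Cardinal.eq.mp hmk
  have hv : LinearIndependent ℚ (fun x : K1 ⊕ K2 => ((e x : s) : ℝ)) :=
    hsli.comp e e.injective
  set v : K1 ⊕ K2 → ℝ := fun x => ((e x : s) : ℝ) with hvdef
  have hvinj : Function.Injective v := hv.injective
  have key : ∀ j : K2, ∃ p : ℕ × K1 × K1, p.2.1 ≠ p.2.2 ∧
      g (v (Sum.inl p.2.1) + v (Sum.inr j)) = p.1 ∧
      g (v (Sum.inl p.2.2) + v (Sum.inr j)) = p.1 := by
    intro j
    by_contra hc
    push_neg at hc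
    have hinj : Function.Injective (fun i : K1 => g (v (Sum.inl i) + v (Sum.inr j))) := by
      intro i1 i2 hi
      by_contra hne
      exact hc (g (v (Sum.inl i1) + v (Sum.inr j)), i1, i2) hne rfl hi.symm
    have hle := Cardinal.mk_le_of_injective hinj
    rw [Cardinal.mk_out, Cardinal.mk_nat] at hle
    exact absurd hle (not_le.mpr Cardinal.aleph0_lt_aleph_one)
  choose Φ hΦne hΦ1 hΦ2 using key
  have hninj : ¬ Function.Injective Φ := by
    intro hinj
    have hle := Cardinal.mk_le_of_injective hinj
    rw [Cardinal.mk_out] at hle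
    have hlt : #(ℕ × K1 × K1) < Cardinal.aleph 2 := by
      simp only [hK1, hK2, Cardinal.mk_prod, Cardinal.mk_out, Cardinal.mk_nat, Cardinal.lift_id]
      refine Cardinal.mul_lt_of_lt (Cardinal.aleph0_le_aleph 2) ?_ ?_
      · exact Cardinal.aleph0_lt_aleph_one.trans (Cardinal.aleph_lt_aleph.mpr one_lt_two)
      · exact Cardinal.mul_lt_of_lt (Cardinal.aleph0_le_aleph 2)
          (Cardinal.aleph_lt_aleph.mpr one_lt_two)
          (Cardinal.aleph_lt_aleph.mpr one_lt_two)
    exact absurd (hle.trans_lt hlt) (lt_irrefl _)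
  rw [Function.not_injective_iff] at hninj
  obtain ⟨j1, j2, hΦeq, hjne⟩ := hninj
  set n := (Φ j1).1 with hn
  set i1 := (Φ j1).2.1 with hi1
  set i2 := (Φ j1).2.2 with hi2
  have hine : i1 ≠ i2 := hΦne j1
  have c00 : g (v (Sum.inl i1) + v (Sum.inr j1)) = n := hΦ1 j1
  have c10 : g (v (Sum.inl i2) + v (Sum.inr j1)) = n := hΦ2 j1
  have c01 : g (v (Sum.inl i1) + v (Sum.inr j2)) = n := by
    have := hΦ1 j2; rw [← hΦeq] at this; exact this
  have c11 : g (v (Sum.inl i2) + v (Sum.inr j2)) = n := by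
    have := hΦ2 j2; rw [← hΦeq] at this; exact this
  refine ⟨v (Sum.inl i1) + v (Sum.inr j1), v (Sum.inl i1) + v (Sum.inr j2),
    v (Sum.inl i2) + v (Sum.inr j1), v (Sum.inl i2) + v (Sum.inr j2),
    ?_, ?_, ?_, ?_, ?_, ?_, ?_, ?_, ?_, by ring⟩
  · intro hx
    exact hjne (Sum.inr_injective (hvinj (add_left_cancel hx)))
  · intro hx
    exact hine (Sum.inl_injective (hvinj (add_right_cancel hx)))
  · intro hx
    exact four_indep' hv (Sum.inl_ne_inr) (by simpa using hine) (Sum.inl_ne_inr)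
      (Sum.inr_ne_inl) (by simpa using hjne) (Sum.inl_ne_inr) hx
  · intro hx
    exact four_indep' hv (Sum.inl_ne_inr) (by simpa using hine) (Sum.inl_ne_inr)
      (Sum.inr_ne_inl) (by simpa using hjne.symm) (Sum.inl_ne_inr) hx
  · intro hx
    exact hine (Sum.inl_injective (hvinj (add_right_cancel hx)))
  · intro hx
    exact hjne (Sum.inr_injective (hvinj (add_left_cancel hx)))
  · rw [c00, c01]
  · rw [c00, c10]
  · rw [c00, c11]
end

section
/- Assume the Continuum Hypothesis. Then there exists a colouring g : ℝ → ℕ such that there are no four distinct reals x₀₀, x₀₁, x₁₀, x₁₁ with g(x₀₀) = g(x₀₁) = g(x₁₀) = g(x₁₁) and x₀₀ + x₁₁ = x₀₁ + x₁₀. -/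
private lemma aux_span_countable (s : Set ℝ) (hs : s.Countable) :
    Countable (Submodule.span ℤ s) := by
  haveI := hs.to_subtype
  rw [← Subtype.range_coe (s := s)]
  infer_instance

private lemma aux_max4 {α : Type*} [LinearOrder α] (a b c d : α)
    (hab : a ≠ b) (hac : a ≠ c) (had : a ≠ d)
    (hbc : b ≠ c) (hbd : b ≠ d) (hcd : c ≠ d) :
    (b < a ∧ c < a ∧ d < a) ∨ (a < b ∧ c < b ∧ d < b) ∨
    (a < c ∧ b < c ∧ d < c) ∨ (a < d ∧ b < d ∧ c < d) := by
  rcases max_cases a b with ⟨h1, h2⟩ | ⟨h1, h2⟩ <;>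
  rcases max_cases c d with ⟨h3, h4⟩ | ⟨h3, h4⟩ <;>
  rcases max_cases (max a b) (max c d) with ⟨h5, h6⟩ | ⟨h5, h6⟩ <;>
  rw [h1, h3] at h6
  · exact Or.inl ⟨h2.lt_of_ne hab.symm, h6.lt_of_ne hac.symm, (h4.trans h6).lt_of_ne had.symm⟩
  · exact Or.inr (Or.inr (Or.inl ⟨h6, (h2.trans h6.le).lt_of_ne hbc, h4.lt_of_ne hcd.symm⟩))
  · exact Or.inl ⟨h2.lt_of_ne hab.symm, (h4.le.trans h6).lt_of_ne hac.symm, h6.lt_of_ne had.symm⟩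
  · exact Or.inr (Or.inr (Or.inr ⟨h6, (h2.trans h6.le).lt_of_ne hbd, h4⟩))
  · exact Or.inr (Or.inl ⟨h2, h6.lt_of_ne hbc.symm, (h4.trans h6).lt_of_ne hbd.symm⟩)
  · exact Or.inr (Or.inr (Or.inl ⟨h2.trans h6, h6, h4.lt_of_ne hcd.symm⟩))
  · exact Or.inr (Or.inl ⟨h2, (h4.le.trans h6).lt_of_ne hbc.symm, h6.lt_of_ne hbd.symm⟩)
  · exact Or.inr (Or.inr (Or.inr ⟨h2.trans h6, h6, h4⟩))

open Cardinal in
/-- Under CH there is a colouring `g : ℝ → ℕ` admitting no four distinct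
monochromatic reals with `x₀₀ + x₁₁ = x₀₁ + x₁₀`. -/
theorem CH_implies_schur_colouring
    (hCH : Cardinal.continuum = Cardinal.aleph 1) :
    ∃ g : ℝ → ℕ, ¬ ∃ x₀₀ x₀₁ x₁₀ x₁₁ : ℝ,
      x₀₀ ≠ x₀₁ ∧ x₀₀ ≠ x₁₀ ∧ x₀₀ ≠ x₁₁ ∧ x₀₁ ≠ x₁₀ ∧ x₀₁ ≠ x₁₁ ∧ x₁₀ ≠ x₁₁ ∧
      g x₀₀ = g x₀₁ ∧ g x₀₀ = g x₁₀ ∧ g x₀₀ = g x₁₁ ∧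
      x₀₀ + x₁₁ = x₀₁ + x₁₀ := by
  classical
  set O := (Cardinal.aleph 1).ord.ToType with hO
  have hCH0 : Cardinal.continuum.{0} = Cardinal.aleph.{0} 1 := by
    have hl : Cardinal.lift.{u_1} Cardinal.continuum.{0}
        = Cardinal.lift.{u_1} (Cardinal.aleph.{0} 1) := by
      rw [Cardinal.lift_continuum, Cardinal.lift_aleph, Ordinal.lift_one]
      exact hCH
    exact Cardinal.lift_inj.mp hl
  have h1 : #ℝ = #O := by
    rw [Cardinal.mk_real, hCH0, hO, Cardinal.mk_ord_toType]
  obtain ⟨e⟩ := Cardinal.eq.mp h1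
  -- the chain of countable subgroups
  set S : O → Submodule ℤ ℝ := fun a => Submodule.span ℤ {x : ℝ | e x ≤ a} with hS
  have hmem : ∀ x : ℝ, x ∈ S (e x) := fun x => Submodule.subset_span (le_refl (e x))
  have hmono : ∀ {a b : O}, a ≤ b → S a ≤ S b := fun hab =>
    Submodule.span_mono (fun x hx => le_trans hx hab)
  have hcnt : ∀ a : O, Countable (S a) := by
    intro a
    apply aux_span_countable
    have hIio : (Set.Iio a).Countable := by
      rw [(Cardinal.countable_iff_lt_aleph_one _)]
      exact Cardinal.mk_Iio_ord_toType a
    have hIic : (Set.Iic a).Countable := by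
      rw [← Set.Iio_insert]; exact hIio.insert a
    have : {x : ℝ | e x ≤ a} = e ⁻¹' (Set.Iic a) := rfl
    rw [this]
    exact hIic.preimage e.injective
  -- the level function
  have hwf : WellFounded ((· < ·) : O → O → Prop) := IsWellFounded.wf
  set lev : ℝ → O := fun x => hwf.min {a : O | x ∈ S a} ⟨e x, hmem x⟩ with hlev
  have hlev_mem : ∀ x : ℝ, x ∈ S (lev x) := fun x => hwf.min_mem {a : O | x ∈ S a} ⟨e x, hmem x⟩
  have hlev_min : ∀ (x : ℝ) (a : O), x ∈ S a → ¬ a < lev x := fun x a hx =>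
    hwf.not_lt_min {a : O | x ∈ S a} hx
  -- the colouring
  have hF : ∀ a : O, ∃ F : ℝ → ℕ, ∀ x ∈ S a, ∀ y ∈ S a, F x = F y → x = y := by
    intro a
    haveI := hcnt a
    obtain ⟨f, hf⟩ := exists_injective_nat (S a)
    refine ⟨fun x => if h : x ∈ S a then f ⟨x, h⟩ else 0, fun x hx y hy hxy => ?_⟩
    have hxy' : f ⟨x, hx⟩ = f ⟨y, hy⟩ := by simpa [dif_pos hx, dif_pos hy] using hxy
    exact Subtype.ext_iff.mp (hf hxy')
  choose F hFinj using hF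
  refine ⟨fun x => F (lev x) x, ?_⟩
  rintro ⟨x00, x01, x10, x11, h1, h2, h3, h4, h5, h6, hg1, hg2, hg3, heq⟩
  -- equal colours at equal level force equality
  have hkey : ∀ x y : ℝ, F (lev x) x = F (lev y) y → lev x = lev y → x = y := by
    intro x y hg hl
    have hy : y ∈ S (lev x) := hl ▸ hlev_mem y
    have : F (lev x) y = F (lev y) y := by rw [hl]
    exact hFinj (lev x) x (hlev_mem x) y hy (hg.trans this.symm)
  -- a strict maximum level leads to a contradiction
  have hstep : ∀ a b c d : ℝ, a = b + c - d →
      lev b < lev a → lev c < lev a → lev d < lev a → False := by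
    intro a b c d habcd hb hc hd
    set m : O := max (lev b) (max (lev c) (lev d)) with hm
    have hbm : b ∈ S m := hmono (le_max_left _ _) (hlev_mem b)
    have hcm : c ∈ S m := hmono (le_trans (le_max_left _ _) (le_max_right _ _)) (hlev_mem c)
    have hdm : d ∈ S m := hmono (le_trans (le_max_right _ _) (le_max_right _ _)) (hlev_mem d)
    have ham : a ∈ S m := by rw [habcd]; exact sub_mem (add_mem hbm hcm) hdm
    exact hlev_min a m ham (max_lt hb (max_lt hc hd))
  -- the four levels are pairwise distinct
  have hg4 : F (lev x01) x01 = F (lev x10) x10 := hg1.symm.trans hg2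
  have hg5 : F (lev x01) x01 = F (lev x11) x11 := hg1.symm.trans hg3
  have hg6 : F (lev x10) x10 = F (lev x11) x11 := hg2.symm.trans hg3
  have n1 : lev x00 ≠ lev x01 := fun h => h1 (hkey _ _ hg1 h)
  have n2 : lev x00 ≠ lev x10 := fun h => h2 (hkey _ _ hg2 h)
  have n3 : lev x00 ≠ lev x11 := fun h => h3 (hkey _ _ hg3 h)
  have n4 : lev x01 ≠ lev x10 := fun h => h4 (hkey _ _ hg4 h)
  have n5 : lev x01 ≠ lev x11 := fun h => h5 (hkey _ _ hg5 h)
  have n6 : lev x10 ≠ lev x11 := fun h => h6 (hkey _ _ hg6 h)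
  rcases aux_max4 (lev x00) (lev x01) (lev x10) (lev x11) n1 n2 n3 n4 n5 n6 with
    ⟨ha, hb, hc⟩ | ⟨ha, hb, hc⟩ | ⟨ha, hb, hc⟩ | ⟨ha, hb, hc⟩
  · exact hstep x00 x01 x10 x11 (by linarith) ha hb hc
  · exact hstep x01 x00 x11 x10 (by linarith) ha hc hb
  · exact hstep x10 x00 x11 x01 (by linarith) ha hc hb
  · exact hstep x11 x01 x10 x00 (by linarith) hb hc ha
end

section
/- For every real number r, the set {t ∈ ℝ : t < 1 ∧ t · sin t = r} is countable and infinite. -/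
open Real Set

lemma analyticOnNhd_csin : AnalyticOnNhd ℂ Complex.sin Set.univ := by
  intro z _
  have hdef : Complex.sin = fun z : ℂ =>
      ((Complex.exp (-z * Complex.I) - Complex.exp (z * Complex.I)) * Complex.I) / 2 := rfl
  rw [hdef]
  exact ((((analyticAt_id.neg.mul analyticAt_const).cexp).sub
    ((analyticAt_id.mul analyticAt_const).cexp)).mul analyticAt_const).div
    analyticAt_const two_ne_zero

lemma analyticOnNhd_rsin : AnalyticOnNhd ℝ Real.sin Set.univ := by
  intro x _
  have h2 : AnalyticAt ℝ (fun x : ℝ => Complex.sin (x : ℂ)) x :=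
    ((analyticOnNhd_csin (x : ℂ) (mem_univ _)).restrictScalars).comp
      (Complex.ofRealCLM.analyticAt x)
  have h3 : AnalyticAt ℝ (fun x : ℝ => (Complex.sin (x : ℂ)).re) x :=
    (Complex.reCLM.analyticAt _).comp h2
  exact h3

lemma analyticOnNhd_tsin : AnalyticOnNhd ℝ (fun t : ℝ => t * Real.sin t) Set.univ :=
  fun x hx => analyticAt_id.mul (analyticOnNhd_rsin x hx)

lemma tsin_level_countable (r : ℝ) : {t : ℝ | t * Real.sin t = r}.Countable := by
  set Z := {t : ℝ | t * Real.sin t = r} with hZ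
  have hcover : Z = ⋃ n : ℕ, Z ∩ Icc (-(n : ℝ)) n := by
    ext t
    simp only [mem_iUnion, mem_inter_iff, mem_Icc]
    constructor
    · intro ht
      obtain ⟨n, hn⟩ := exists_nat_ge |t|
      exact ⟨n, ht, neg_le_of_abs_le hn, le_of_abs_le hn⟩
    · rintro ⟨n, ht, _⟩; exact ht
  rw [hcover]
  apply Set.countable_iUnion
  intro n
  apply Set.Finite.countable
  by_contra hinf
  obtain ⟨x, -, hacc⟩ := Set.Infinite.exists_accPt_of_subset_isCompact hinf isCompact_Icc inter_subset_right
  rw [accPt_iff_frequently] at hacc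
  have hfreq : ∃ᶠ y in nhdsWithin x {x}ᶜ, y * Real.sin y = (fun _ : ℝ => r) y := by
    rw [frequently_nhdsWithin_iff]
    exact hacc.mono (fun y hy => ⟨hy.2.1, hy.1⟩)
  have heq : (fun t : ℝ => t * Real.sin t) = fun _ => r :=
    analyticOnNhd_tsin.eq_of_frequently_eq (analyticOnNhd_const) hfreq
  have h1 : π / 2 * Real.sin (π / 2) = r := congrFun heq (π / 2)
  have h2 : (π / 2 + π) * Real.sin (π / 2 + π) = r := congrFun heq (π / 2 + π)
  rw [Real.sin_pi_div_two] at h1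
  rw [Real.sin_add_pi, Real.sin_pi_div_two] at h2
  have hπ := Real.pi_pos
  nlinarith

lemma tsin_fiber_not_bddBelow (r : ℝ) :
    ¬ BddBelow {t : ℝ | t < 1 ∧ t * Real.sin t = r} := by
  rw [not_bddBelow_iff]
  intro b
  obtain ⟨n, hn⟩ := exists_nat_gt (max |r| (-b))
  have hπ := Real.pi_pos
  set u : ℝ := π / 2 + n * (2 * π) with hu
  set v : ℝ := π / 2 + π + n * (2 * π) with hv
  have hπ3 := Real.pi_gt_three
  have hn' : (n : ℝ) ≤ u := by
    have h01 : (1:ℝ) ≤ 2 * π := by linarith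
    have : (n : ℝ) * 1 ≤ (n : ℝ) * (2 * π) :=
      mul_le_mul_of_nonneg_left h01 (Nat.cast_nonneg n)
    rw [hu]
    linarith
  have huv : -v ≤ -u := by simp [hu, hv]; linarith
  have hfu : -u * Real.sin (-u) = u := by
    rw [Real.sin_neg, hu, Real.sin_add_nat_mul_two_pi, Real.sin_pi_div_two]
    ring
  have hfv : -v * Real.sin (-v) = -v := by
    rw [Real.sin_neg, hv, Real.sin_add_nat_mul_two_pi, Real.sin_add_pi, Real.sin_pi_div_two]
    ring
  have hcont : ContinuousOn (fun t : ℝ => t * Real.sin t) (Icc (-v) (-u)) :=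
    (continuous_id.mul Real.continuous_sin).continuousOn
  have habs : |r| < u := lt_of_lt_of_le (lt_of_le_of_lt (le_max_left _ _) hn) hn'
  have hmem : r ∈ Icc ((fun t : ℝ => t * Real.sin t) (-v)) ((fun t : ℝ => t * Real.sin t) (-u)) := by
    simp only [hfu, hfv, mem_Icc]
    constructor
    · have : -u ≤ r := neg_le_of_abs_le habs.le
      have : -v ≤ -u := huv
      linarith
    · exact le_of_abs_le habs.le
  obtain ⟨t, htI, htr⟩ := intermediate_value_Icc huv hcont hmem
  refine ⟨t, ⟨?_, htr⟩, ?_⟩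
  · have : t ≤ -u := htI.2
    linarith
  · have h1 : t ≤ -u := htI.2
    have h2 : -(n : ℝ) < b := by
      have := lt_of_le_of_lt (le_max_right |r| (-b)) hn
      linarith
    linarith

/-- For every real `r`, the set `{t < 1 : t·sin t = r}` is countably infinite. -/
theorem tsin_fiber_countable_infinite (r : ℝ) :
    {t : ℝ | t < 1 ∧ t * Real.sin t = r}.Countable ∧
    {t : ℝ | t < 1 ∧ t * Real.sin t = r}.Infinite := by
  constructor
  · exact (tsin_level_countable r).mono (fun t ht => ht.2)
  · intro hfin
    exact tsin_fiber_not_bddBelow r hfin.bddBelow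
end
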